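/- arXiv:2001.08478 — 3 statements merged into one kernel-verified Lean document; each statement's English description precedes it below -/
import Mathlib

section
/- Let (Σ, <) be a well-founded partial order. Then the relation ▷+ restricted to star-free trees is strongly normalizing: there is no infinite sequence t0, t1, t2, … of star-free trees over Σ with ti ▷+ t(i+1) for all i. -/
namespace StarGames

/-- Unranked terms over signature `σ` and variables `X`. -/
inductive Term (σ : Type) (X : Type) : Type
  | var : X → Term σ X
  | app : σ → List (Term σ X) → Term σ X

variable {σ σ' X : Type}

/-- Relabeling of symbols. -/
def Term.relabel (h : σ → σ') : Term σ X → Term σ' X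
  | .var x => .var x
  | .app f ts => .app (h f) (ts.attach.map fun ⟨t, _⟩ => t.relabel h)
decreasing_by
  have := List.sizeOf_lt_of_mem ‹_ ∈ ts›
  simp only [Term.app.sizeOf_spec]
  omega

/-- Closure of a root-step relation under contexts (rewriting inside one argument). -/
inductive Rewrite (R : Term σ X → Term σ X → Prop) : Term σ X → Term σ X → Prop
  | root {s t : Term σ X} : R s t → Rewrite R s t
  | congr {s t : Term σ X} (f : σ) (pre post : List (Term σ X)) :
      Rewrite R s t →
      Rewrite R (Term.app f (pre ++ s :: post)) (Term.app f (pre ++ t :: post))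

/-- Root steps of the swap TRS:  f(u⃗,x,y,w⃗) → f(u⃗,y,x,w⃗). -/
inductive SwapRoot : Term σ X → Term σ X → Prop
  | swap (f : σ) (us : List (Term σ X)) (x y : Term σ X) (ws : List (Term σ X)) :
      SwapRoot (Term.app f (us ++ x :: y :: ws)) (Term.app f (us ++ y :: x :: ws))

/-- One swap step, anywhere in a term. -/
def SwapStep : Term σ X → Term σ X → Prop := Rewrite (SwapRoot (σ := σ) (X := X))

/-- `≃` : the equivalence relation generated by swap steps. -/
def TermEquiv : Term σ X → Term σ X → Prop := Relation.EqvGen SwapStep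

def treeSetoid (σ X : Type) : Setoid (Term σ X) :=
  ⟨TermEquiv, Relation.EqvGen.is_equivalence _⟩

/-- (Unordered) trees: terms modulo permutation of arguments. -/
def Tree (σ X : Type) := Quotient (treeSetoid σ X)

def Tree.mk (t : Term σ X) : Tree σ X := Quotient.mk (treeSetoid σ X) t

/-- Rewrite relation induced on trees by a root-step relation. -/
def TreeRel (R : Term σ X → Term σ X → Prop) : Tree σ X → Tree σ X → Prop :=
  fun a b => ∃ s t : Term σ X, a = Tree.mk s ∧ b = Tree.mk t ∧ Rewrite R s t

/-- Terms all of whose symbols satisfy `p`. -/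
inductive Uses (p : σ → Prop) : Term σ X → Prop
  | var (x : X) : Uses p (Term.var x)
  | app (f : σ) (ts : List (Term σ X)) :
      p f → (∀ t ∈ ts, Uses p t) → Uses p (Term.app f ts)

end StarGames
namespace StarGames

variable {σ X : Type}

/-- Root steps of the TRS `Star` over `Σ ∪ Σ⋆`.
`Sum.inl f` is the plain symbol `f`, `Sum.inr f` is the marked symbol `f⋆`.
`lt a b` means `a < b` in the precedence. -/
inductive StarRoot (lt : σ → σ → Prop) : Term (σ ⊕ σ) X → Term (σ ⊕ σ) X → Prop
  | put (f : σ) (ts : List (Term (σ ⊕ σ) X)) :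
      StarRoot lt (.app (.inl f) ts) (.app (.inr f) ts)
  | select (f : σ) (xs : List (Term (σ ⊕ σ) X)) (y : Term (σ ⊕ σ) X)
      (zs : List (Term (σ ⊕ σ) X)) :
      StarRoot lt (.app (.inr f) (xs ++ y :: zs)) y
  | copy (f g : σ) (k : ℕ) (ts : List (Term (σ ⊕ σ) X)) :
      lt g f →
      StarRoot lt (.app (.inr f) ts)
        (.app (.inl g) (List.replicate k (Term.app (.inr f) ts)))
  | down (f g : σ) (k : ℕ) (xs ys zs : List (Term (σ ⊕ σ) X)) :
      StarRoot lt (.app (.inr f) (xs ++ Term.app (.inl g) ys :: zs))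
        (.app (.inl f) (xs ++ List.replicate k (Term.app (.inr g) ys) ++ zs))

/-- `▷` on terms over `Σ ∪ Σ⋆`. -/
def StarStep (lt : σ → σ → Prop) : Term (σ ⊕ σ) X → Term (σ ⊕ σ) X → Prop :=
  Rewrite (StarRoot lt)

/-- `▷` on trees over `Σ ∪ Σ⋆`. -/
def StarTree (lt : σ → σ → Prop) : Tree (σ ⊕ σ) X → Tree (σ ⊕ σ) X → Prop :=
  TreeRel (StarRoot lt)

/-- A symbol of `Σ ∪ Σ⋆` is unmarked if it belongs to `Σ`. -/
def Unstarred : σ ⊕ σ → Prop := fun s => ∃ f : σ, s = Sum.inl f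

/-- A term is star-free if it contains no marked symbol. -/
def StarFreeTerm : Term (σ ⊕ σ) X → Prop := Uses Unstarred

/-- A tree is star-free if it contains no marked symbol. -/
def StarFreeTree (T : Tree (σ ⊕ σ) X) : Prop :=
  ∃ t : Term (σ ⊕ σ) X, T = Tree.mk t ∧ StarFreeTerm t

end StarGames

namespace Ordinal

universe uN

noncomputable def nadd (a b : Ordinal.{uN}) : Ordinal.{uN} :=
  max (⨆ x : Set.Iio a, Order.succ (nadd x.1 b)) (⨆ x : Set.Iio b, Order.succ (nadd a x.1))
termination_by (a, b)
decreasing_by all_goals cases x; decreasing_tactic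

end Ordinal

namespace NaturalOps

infixl:65 " ♯ " => Ordinal.nadd

end NaturalOps

namespace Ordinal

theorem nadd_le_iff {a b c : Ordinal.{uN}} :
    b ♯ c ≤ a ↔ (∀ b' < b, b' ♯ c < a) ∧ ∀ c' < c, b ♯ c' < a := by
  rw [nadd, max_le_iff, Ordinal.iSup_le_iff, Ordinal.iSup_le_iff]
  simp only [Order.succ_le_iff, Subtype.forall, Set.mem_Iio]

theorem lt_nadd_iff {a b c : Ordinal.{uN}} :
    a < b ♯ c ↔ (∃ b' < b, a ≤ b' ♯ c) ∨ ∃ c' < c, a ≤ b ♯ c' := by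
  rw [← not_le, nadd_le_iff]
  simp only [not_and_or, not_forall, not_lt, exists_prop]

theorem nadd_lt_nadd_left {b c : Ordinal.{uN}} (h : b < c) (a : Ordinal.{uN}) :
    a ♯ b < a ♯ c := lt_nadd_iff.2 (Or.inr ⟨b, h, le_rfl⟩)

theorem nadd_lt_nadd_right {b c : Ordinal.{uN}} (h : b < c) (a : Ordinal.{uN}) :
    b ♯ a < c ♯ a := lt_nadd_iff.2 (Or.inl ⟨b, h, le_rfl⟩)

theorem nadd_le_nadd_left {b c : Ordinal.{uN}} (h : b ≤ c) (a : Ordinal.{uN}) :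
    a ♯ b ≤ a ♯ c := by
  rcases h.lt_or_eq with h | rfl
  · exact (nadd_lt_nadd_left h a).le
  · exact le_rfl

theorem nadd_le_nadd_right {b c : Ordinal.{uN}} (h : b ≤ c) (a : Ordinal.{uN}) :
    b ♯ a ≤ c ♯ a := by
  rcases h.lt_or_eq with h | rfl
  · exact (nadd_lt_nadd_right h a).le
  · exact le_rfl

theorem nadd_comm (a b : Ordinal.{uN}) : a ♯ b = b ♯ a := by
  rw [nadd, nadd, max_comm]
  congr 1
  · congr 1; ext x; rw [nadd_comm a x.1]
  · congr 1; ext x; rw [nadd_comm x.1 b]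
termination_by (a, b)
decreasing_by all_goals cases x; decreasing_tactic

@[simp]
theorem nadd_zero (a : Ordinal.{uN}) : a ♯ 0 = a := by
  induction a using Ordinal.induction with
  | _ a ih =>
  apply le_antisymm
  · rw [nadd_le_iff]
    refine ⟨fun a' ha' => by rw [ih a' ha']; exact ha', fun c' hc' => ?_⟩
    exact absurd hc' (not_lt_of_ge zero_le)
  · apply le_of_forall_lt
    intro x hx
    have := nadd_lt_nadd_right hx 0
    rwa [ih x hx] at this

@[simp]
theorem zero_nadd (a : Ordinal.{uN}) : 0 ♯ a = a := by rw [nadd_comm, nadd_zero]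

theorem le_self_nadd {a b : Ordinal.{uN}} : a ≤ a ♯ b := by
  simpa using nadd_le_nadd_left (zero_le (a := b)) a

theorem le_nadd_self {a b : Ordinal.{uN}} : a ≤ b ♯ a := by
  rw [nadd_comm]; exact le_self_nadd

theorem nadd_le_nadd {a b c d : Ordinal.{uN}} (h₁ : a ≤ b) (h₂ : c ≤ d) : a ♯ c ≤ b ♯ d :=
  (nadd_le_nadd_right h₁ c).trans (nadd_le_nadd_left h₂ b)

theorem nadd_lt_nadd_of_lt_of_le {a b c d : Ordinal.{uN}} (h₁ : a < b) (h₂ : c ≤ d) :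
    a ♯ c < b ♯ d :=
  (nadd_lt_nadd_right h₁ c).trans_le (nadd_le_nadd_left h₂ b)

theorem nadd_lt_nadd_of_le_of_lt {a b c d : Ordinal.{uN}} (h₁ : a ≤ b) (h₂ : c < d) :
    a ♯ c < b ♯ d :=
  (nadd_le_nadd_right h₁ c).trans_lt (nadd_lt_nadd_left h₂ b)

theorem nadd_assoc (a b c : Ordinal.{uN}) : a ♯ b ♯ c = a ♯ (b ♯ c) := by
  apply le_antisymm
  · rw [nadd_le_iff]
    refine ⟨fun d hd => ?_, fun c' hc' => ?_⟩
    · rcases lt_nadd_iff.1 hd with ⟨a', ha', hd'⟩ | ⟨b', hb', hd'⟩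
      · exact (nadd_le_nadd_right hd' c).trans_lt
          ((nadd_assoc a' b c).symm ▸ nadd_lt_nadd_right ha' _)
      · exact (nadd_le_nadd_right hd' c).trans_lt
          ((nadd_assoc a b' c).symm ▸ nadd_lt_nadd_left (nadd_lt_nadd_right hb' c) a)
    · rw [nadd_assoc a b c']
      exact nadd_lt_nadd_left (nadd_lt_nadd_left hc' b) a
  · rw [nadd_le_iff]
    refine ⟨fun a' ha' => ?_, fun d hd => ?_⟩
    · rw [← nadd_assoc a' b c]
      exact nadd_lt_nadd_right (nadd_lt_nadd_right ha' b) c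
    · rcases lt_nadd_iff.1 hd with ⟨b', hb', hd'⟩ | ⟨c', hc', hd'⟩
      · exact (nadd_le_nadd_left hd' a).trans_lt
          ((nadd_assoc a b' c) ▸ nadd_lt_nadd_right (nadd_lt_nadd_left hb' a) c)
      · exact (nadd_le_nadd_left hd' a).trans_lt
          ((nadd_assoc a b c') ▸ nadd_lt_nadd_left hc' _)
termination_by (a, b, c)

theorem nadd_left_comm (a b c : Ordinal.{uN}) : a ♯ (b ♯ c) = b ♯ (a ♯ c) := by
  rw [← nadd_assoc, nadd_comm a b, nadd_assoc]

theorem one_nadd (a : Ordinal.{uN}) : 1 ♯ a = Order.succ a := by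
  induction a using Ordinal.induction with
  | _ a ih =>
  apply le_antisymm
  · rw [nadd_le_iff]
    refine ⟨fun a' ha' => ?_, fun c' hc' => ?_⟩
    · rw [Ordinal.lt_one_iff_zero] at ha'
      subst ha'
      rw [zero_nadd]; exact Order.lt_succ a
    · rw [ih c' hc']; exact Order.succ_lt_succ hc'
  · rw [Order.succ_le_iff]
    have := nadd_lt_nadd_right zero_lt_one a
    rwa [zero_nadd] at this

theorem add_le_nadd (a b : Ordinal.{uN}) : a + b ≤ a ♯ b := by
  induction b using Ordinal.induction with
  | _ b ih =>
  apply le_of_forall_lt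
  intro x hx
  rcases lt_or_ge x a with h | h
  · exact h.trans_le le_self_nadd
  · have hx' : x = a + (x - a) := (Ordinal.add_sub_cancel_of_le h).symm
    have hd : x - a < b := by
      rw [hx'] at hx; exact (add_lt_add_iff_left a).1 hx
    rw [hx']
    exact (ih _ hd).trans_lt (nadd_lt_nadd_left hd a)

end Ordinal

open Ordinal Order NaturalOps

private theorem nadd_master {D : Ordinal} (hD : 0 < D)
    (HD : ∀ a < D, ∀ b < D, a ♯ b < D) :
    ∀ (k n m : ℕ), n + m = k → ∀ a₀ < D, ∀ b₀ < D,
      (D * n + a₀) ♯ (D * m + b₀) = D * ((n + m : ℕ) : Ordinal) + (a₀ ♯ b₀) := by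
  intro k
  induction k using Nat.strong_induction_on with
  | _ k ihk =>
  intro n m hk a₀
  induction a₀ using Ordinal.induction with
  | _ a₀ iha =>
  intro ha₀ b₀
  induction b₀ using Ordinal.induction with
  | _ b₀ ihb =>
  intro hb₀
  have hDne : D ≠ 0 := hD.ne'
  have decomp : ∀ (x : Ordinal) (j : ℕ) (c : Ordinal), c < D → x < D * j + c →
      ∃ (q : ℕ) (r : Ordinal), r < D ∧ x = D * q + r ∧ (q < j ∨ (q = j ∧ r < c)) := by
    intro x j c hc hx
    have hxj : x < D * succ (j : Ordinal) := by
      refine hx.trans_le ?_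
      rw [mul_succ]
      exact add_le_add_right hc.le _
    have hq : x / D < succ (j : Ordinal) := (div_lt hDne).2 hxj
    have hqn : x / D ≤ (j : Ordinal) := lt_succ_iff.1 hq
    obtain ⟨q, hq'⟩ := Ordinal.lt_omega0.1 (hqn.trans_lt (nat_lt_omega0 j))
    have hr : x % D < D := mod_lt x hDne
    have hxeq : x = D * q + x % D := by rw [← hq', div_add_mod]
    have hqj : q ≤ j := by exact_mod_cast hq' ▸ hqn
    rcases lt_or_eq_of_le hqj with h | h
    · exact ⟨q, x % D, hr, hxeq, Or.inl h⟩
    · subst h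
      refine ⟨q, x % D, hr, hxeq, Or.inr ⟨rfl, ?_⟩⟩
      have := hxeq ▸ hx
      exact (add_lt_add_iff_left _).1 this
  apply le_antisymm
  · rw [nadd_le_iff]
    constructor
    · intro x hx
      obtain ⟨q, r, hr, hxeq, hcase⟩ := decomp x n a₀ ha₀ hx
      rcases hcase with h | ⟨rfl, hra⟩
      · have hmas := ihk (q + m) (by omega) q m rfl r hr b₀ hb₀
        rw [hxeq, hmas]
        have h1 : D * ((q + m : ℕ) : Ordinal) + (r ♯ b₀) < D * ((q + m + 1 : ℕ) : Ordinal) := by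
          have : ((q + m + 1 : ℕ) : Ordinal) = succ ((q + m : ℕ) : Ordinal) := by
            push_cast; rw [add_one_eq_succ]
          rw [this, mul_succ]
          exact add_lt_add_right (HD r hr b₀ hb₀) _
        refine h1.trans_le ?_
        refine le_trans (mul_le_mul_right ?_ D) le_self_add
        exact Nat.cast_le.2 (by omega)
      · have hmas := iha r hra (hra.trans ha₀) b₀ hb₀
        rw [hxeq, hmas]
        exact add_lt_add_right (nadd_lt_nadd_right hra b₀) _
    · intro y hy
      obtain ⟨q, r, hr, hyeq, hcase⟩ := decomp y m b₀ hb₀ hy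
      rcases hcase with h | ⟨rfl, hrb⟩
      · have hmas := ihk (n + q) (by omega) n q rfl a₀ ha₀ r hr
        rw [hyeq, hmas]
        have h1 : D * ((n + q : ℕ) : Ordinal) + (a₀ ♯ r) < D * ((n + q + 1 : ℕ) : Ordinal) := by
          have : ((n + q + 1 : ℕ) : Ordinal) = succ ((n + q : ℕ) : Ordinal) := by
            push_cast; rw [add_one_eq_succ]
          rw [this, mul_succ]
          exact add_lt_add_right (HD a₀ ha₀ r hr) _
        refine h1.trans_le ?_
        refine le_trans (mul_le_mul_right ?_ D) le_self_add
        exact Nat.cast_le.2 (by omega)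
      · have hmas := ihb r hrb (hrb.trans hb₀)
        rw [hyeq, hmas]
        exact add_lt_add_right (nadd_lt_nadd_left hrb a₀) _
  · apply le_of_forall_lt
    intro x hx
    rcases lt_or_ge x (D * ((n + m : ℕ) : Ordinal)) with h | h
    · refine h.trans_le ?_
      have e1 : D * ((n + m : ℕ) : Ordinal) = D * n + D * m := by
        push_cast; rw [mul_add]
      rw [e1]
      refine le_trans ?_ (add_le_nadd _ _)
      rw [add_assoc]
      refine add_le_add_right ?_ _
      exact le_trans le_self_add le_add_self
    · have hne : a₀ ♯ b₀ ≠ 0 := by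
        intro h0
        rw [h0, add_zero] at hx
        exact absurd hx h.not_gt
      obtain ⟨d, hd, hxd⟩ := (lt_add_iff hne).1 hx
      rcases lt_nadd_iff.1 hd with ⟨a', ha', hda⟩ | ⟨b', hb', hdb⟩
      · have hmas := iha a' ha' (ha'.trans ha₀) b₀ hb₀
        calc x ≤ D * ((n + m : ℕ) : Ordinal) + d := hxd
          _ ≤ D * ((n + m : ℕ) : Ordinal) + (a' ♯ b₀) := add_le_add_right hda _
          _ = (D * n + a') ♯ (D * m + b₀) := hmas.symm
          _ < (D * n + a₀) ♯ (D * m + b₀) :=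
              nadd_lt_nadd_right (add_lt_add_right ha' _) _
      · have hmas := ihb b' hb' (hb'.trans hb₀)
        calc x ≤ D * ((n + m : ℕ) : Ordinal) + d := hxd
          _ ≤ D * ((n + m : ℕ) : Ordinal) + (a₀ ♯ b') := add_le_add_right hdb _
          _ = (D * n + a₀) ♯ (D * m + b') := hmas.symm
          _ < (D * n + a₀) ♯ (D * m + b₀) :=
              nadd_lt_nadd_left (add_lt_add_right hb' _) _

private theorem nadd_opow_principal :
    ∀ (e : Ordinal), ∀ a < (Ordinal.omega0) ^ e, ∀ b < (Ordinal.omega0) ^ e,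
      a ♯ b < (Ordinal.omega0) ^ e := by
  intro e
  induction e using Ordinal.induction with
  | _ e ihe =>
  intro a ha b hb
  rcases eq_or_ne a 0 with rfl | ha0
  · rwa [zero_nadd]
  rcases eq_or_ne b 0 with rfl | hb0
  · rwa [nadd_zero]
  set d := max (log omega0 a) (log omega0 b) with hd
  have hde : d < e := by
    apply max_lt
    · exact (lt_opow_iff_log_lt one_lt_omega0 ha0).1 ha
    · exact (lt_opow_iff_log_lt one_lt_omega0 hb0).1 hb
  have ha' : a < omega0 ^ succ d := by
    refine (lt_opow_succ_log_self one_lt_omega0 a).trans_le ?_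
    exact opow_le_opow_right omega0_pos (succ_le_succ (le_max_left _ _))
  have hb' : b < omega0 ^ succ d := by
    refine (lt_opow_succ_log_self one_lt_omega0 b).trans_le ?_
    exact opow_le_opow_right omega0_pos (succ_le_succ (le_max_right _ _))
  rcases lt_or_eq_of_le (succ_le_of_lt hde) with h | h
  · exact (ihe _ h a ha' b hb').trans_le (opow_le_opow_right omega0_pos h.le)
  · rw [← h]
    rw [opow_succ] at ha' hb' ⊢
    set D := omega0 ^ d with hD
    have hDpos : 0 < D := opow_pos _ omega0_pos
    have HD := ihe d hde
    obtain ⟨n, hn⟩ := Ordinal.lt_omega0.1 ((div_lt hDpos.ne').2 ha')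
    obtain ⟨m, hm⟩ := Ordinal.lt_omega0.1 ((div_lt hDpos.ne').2 hb')
    have haeq : a = D * n + a % D := by rw [← hn, div_add_mod]
    have hbeq : b = D * m + b % D := by rw [← hm, div_add_mod]
    have := nadd_master hDpos HD (n + m) n m rfl (a % D) (mod_lt a hDpos.ne')
      (b % D) (mod_lt b hDpos.ne')
    rw [haeq, hbeq, this]
    have h2 : D * ((n + m : ℕ) : Ordinal) + (a % D ♯ b % D) <
        D * succ ((n + m : ℕ) : Ordinal) := by
      rw [mul_succ]
      exact add_lt_add_right (HD _ (mod_lt a hDpos.ne') _ (mod_lt b hDpos.ne')) _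
    refine h2.trans_le ?_
    apply mul_le_mul_right
    exact (isSuccLimit_omega0.succ_lt (nat_lt_omega0 _)).le
namespace StarGames

open Ordinal Order NaturalOps

/-! ### The ordinal interpretation -/

section Interp

variable {σ X : Type} {lt : σ → σ → Prop}

/-- A Veblen-style hierarchy over the precedence: `Phi hwf f` enumerates the common
fixed points of `ω ^ ·` and all `Phi hwf g` for `g < f`. -/
noncomputable def Phi (hwf : WellFounded lt) : σ → Ordinal.{0} → Ordinal.{0} :=
  hwf.fix (fun f rec => Ordinal.derivFamily
    (fun i : Option {g // lt g f} =>
      match i with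
      | none => fun x => Ordinal.omega0 ^ x
      | some g => rec g.1 g.2))

theorem Phi_eq (hwf : WellFounded lt) (f : σ) :
    Phi hwf f = Ordinal.derivFamily
      (fun i : Option {g // lt g f} =>
        match i with
        | none => fun x => Ordinal.omega0 ^ x
        | some g => Phi hwf g.1) := by
  conv_lhs => rw [Phi, WellFounded.fix_eq]
  rfl

theorem isNormal_Phi (hwf : WellFounded lt) (f : σ) : IsNormal (Phi hwf f) := by
  rw [Phi_eq]; exact isNormal_derivFamily _

theorem Phi_fp_opow (hwf : WellFounded lt) (f : σ) (x : Ordinal) :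
    Ordinal.omega0 ^ (Phi hwf f x) = Phi hwf f x := by
  conv_lhs => rw [Phi_eq]
  conv_rhs => rw [Phi_eq]
  exact Ordinal.derivFamily_fp (i := none) (isNormal_opow one_lt_omega0) x

theorem Phi_fp (hwf : WellFounded lt) {g f : σ} (h : lt g f) (x : Ordinal) :
    Phi hwf g (Phi hwf f x) = Phi hwf f x := by
  conv_lhs => rw [Phi_eq hwf f]
  conv_rhs => rw [Phi_eq hwf f]
  exact Ordinal.derivFamily_fp (i := (some ⟨g, h⟩ : Option {g' // lt g' f})) (isNormal_Phi hwf g) x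

/-- Natural sum of a list of ordinals. -/
noncomputable def sumN : List Ordinal.{0} → Ordinal.{0}
  | [] => 0
  | a :: l => a ♯ sumN l

theorem sumN_append (l₁ l₂ : List Ordinal) : sumN (l₁ ++ l₂) = sumN l₁ ♯ sumN l₂ := by
  induction l₁ with
  | nil => simp [sumN, zero_nadd]
  | cons a l ih => simp [sumN, ih, nadd_assoc]

theorem le_sumN_of_mem {a : Ordinal} {l : List Ordinal} (h : a ∈ l) : a ≤ sumN l := by
  induction l with
  | nil => simp at h
  | cons b l ih =>
    rcases List.mem_cons.1 h with rfl | h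
    · exact le_self_nadd
    · exact (ih h).trans le_nadd_self

theorem sumN_perm {l₁ l₂ : List Ordinal} (h : l₁.Perm l₂) : sumN l₁ = sumN l₂ := by
  induction h with
  | nil => rfl
  | cons a _ ih => simp [sumN, ih]
  | swap a b l => simp [sumN, nadd_left_comm]
  | trans _ _ ih₁ ih₂ => rw [ih₁, ih₂]

theorem sumN_lt {B : Ordinal} (hB : 0 < B) (hind : ∀ a < B, ∀ b < B, a ♯ b < B)
    {l : List Ordinal} (h : ∀ x ∈ l, x < B) : sumN l < B := by
  induction l with
  | nil => exact hB
  | cons a l ih =>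
    exact hind a (h a List.mem_cons_self) _ (ih fun x hx => h x (List.mem_cons_of_mem _ hx))

/-- The ordinal value of a term. -/
noncomputable def tv (hwf : WellFounded lt) : Term (σ ⊕ σ) X → Ordinal.{0}
  | .var _ => 1
  | .app s ts => Phi hwf (Sum.elim id id s)
      (1 ♯ sumN (ts.attach.map fun ⟨t, _⟩ => tv hwf t))
decreasing_by
  have := List.sizeOf_lt_of_mem ‹_ ∈ ts›
  simp only [Term.app.sizeOf_spec]
  omega

theorem tv_app (hwf : WellFounded lt) (s : σ ⊕ σ) (ts : List (Term (σ ⊕ σ) X)) :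
    tv hwf (.app s ts) = Phi hwf (Sum.elim id id s) (1 ♯ sumN (ts.map (tv hwf))) := by
  rw [tv]
  congr 2
  rw [show (fun (x : {t // t ∈ ts}) => tv hwf x.1) = (tv hwf) ∘ Subtype.val from rfl,
    ← List.map_map, List.attach_map_subtype_val]

theorem one_le_tv (hwf : WellFounded lt) (t : Term (σ ⊕ σ) X) : 1 ≤ tv hwf t := by
  cases t with
  | var x => rw [tv]
  | app s ts =>
    rw [tv_app]
    exact le_trans (le_trans le_self_nadd (isNormal_Phi hwf _).strictMono.le_apply) le_rfl

theorem tv_pos (hwf : WellFounded lt) (t : Term (σ ⊕ σ) X) : 0 < tv hwf t :=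
  lt_of_lt_of_le zero_lt_one (one_le_tv hwf t)

theorem tv_indec (hwf : WellFounded lt) (t : Term (σ ⊕ σ) X) :
    ∀ a < tv hwf t, ∀ b < tv hwf t, a ♯ b < tv hwf t := by
  cases t with
  | var x =>
    rw [tv]
    intro a ha b hb
    rw [Ordinal.lt_one_iff_zero] at ha hb
    subst ha; subst hb
    simp [nadd_zero]
  | app s ts =>
    rw [tv_app]
    intro a ha b hb
    have hfp := Phi_fp_opow hwf (Sum.elim id id s) (1 ♯ sumN (ts.map (tv hwf)))
    rw [← hfp] at ha hb ⊢
    exact nadd_opow_principal _ a ha b hb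

theorem one_lt_tv_app (hwf : WellFounded lt) (s : σ ⊕ σ) (ts : List (Term (σ ⊕ σ) X)) :
    1 < tv hwf (.app s ts) := by
  have h1 : 1 ≤ tv hwf (.app s ts) := one_le_tv hwf _
  have hfp : Ordinal.omega0 ^ (tv hwf (.app s ts)) = tv hwf (.app s ts) := by
    rw [tv_app]; exact Phi_fp_opow hwf _ _
  calc (1 : Ordinal) < Ordinal.omega0 := one_lt_omega0
    _ = Ordinal.omega0 ^ (1 : Ordinal) := (opow_one _).symm
    _ ≤ Ordinal.omega0 ^ (tv hwf (.app s ts)) := opow_le_opow_right omega0_pos h1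
    _ = tv hwf (.app s ts) := hfp

theorem tv_lt_app (hwf : WellFounded lt) {t : Term (σ ⊕ σ) X} {s : σ ⊕ σ}
    {ts : List (Term (σ ⊕ σ) X)} (h : t ∈ ts) : tv hwf t < tv hwf (.app s ts) := by
  rw [tv_app]
  have h2 : tv hwf t < 1 ♯ sumN (ts.map (tv hwf)) := by
    rw [one_nadd]
    exact (le_sumN_of_mem (List.mem_map_of_mem h)).trans_lt (lt_succ _)
  exact h2.trans_le (isNormal_Phi hwf _).strictMono.le_apply

end Interp

end StarGames
namespace StarGames

open Ordinal Order NaturalOps List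

section Bound

variable {σ X : Type} {lt : σ → σ → Prop}

/-- Bounding certificates: `Bnd hwf b m t` says that the (possibly marked) term `t`
is bounded by the term `m`: every star-free term reachable from `t` has value
`≤ tv m` (and `< tv m` when `b = true`). -/
inductive Bnd (hwf : WellFounded lt) :
    Bool → Term (σ ⊕ σ) X → Term (σ ⊕ σ) X → Prop
  | var (x : X) : Bnd hwf false (.var x) (.var x)
  | plain (f : σ) (G : List (Term (σ ⊕ σ) X × Bool × List (Term (σ ⊕ σ) X)))
      (ts : List (Term (σ ⊕ σ) X)) (b : Bool)
      (hts : ts.Perm (G.flatMap (fun p => p.2.2)))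
      (h : ∀ p ∈ G, ∀ t ∈ p.2.2, Bnd hwf p.2.1 p.1 t)
      (hw : ∀ p ∈ G, p.2.1 = false → p.2.2.length = 1)
      (hb : b = true → ∃ p ∈ G, p.2.1 = true) :
      Bnd hwf b (.app (.inl f) (G.map (fun p => p.1))) (.app (.inl f) ts)
  | star (f : σ) (G : List (Term (σ ⊕ σ) X × Bool × List (Term (σ ⊕ σ) X)))
      (ts : List (Term (σ ⊕ σ) X))
      (hts : ts.Perm (G.flatMap (fun p => p.2.2)))
      (h : ∀ p ∈ G, ∀ t ∈ p.2.2, Bnd hwf p.2.1 p.1 t)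
      (hw : ∀ p ∈ G, p.2.1 = false → p.2.2.length = 1) :
      Bnd hwf true (.app (.inl f) (G.map (fun p => p.1))) (.app (.inr f) ts)
  | small (f g : σ) (ms ss : List (Term (σ ⊕ σ) X)) (hgf : lt g f)
      (h : ∀ s ∈ ss, Bnd hwf true (.app (.inl f) ms) s) :
      Bnd hwf true (.app (.inl f) ms) (.app (.inl g) ss)
  | smallStar (f g : σ) (ms ss : List (Term (σ ⊕ σ) X)) (hgf : lt g f)
      (h : ∀ s ∈ ss, Bnd hwf true (.app (.inl f) ms) s) :
      Bnd hwf true (.app (.inl f) ms) (.app (.inr g) ss)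
  | weaken (b : Bool) (m m' t : Term (σ ⊕ σ) X) (hm : tv hwf m ≤ tv hwf m')
      (h : Bnd hwf b m t) : Bnd hwf b m' t
  | strengthen (b : Bool) (m m' t : Term (σ ⊕ σ) X) (hm : tv hwf m < tv hwf m')
      (h : Bnd hwf b m t) : Bnd hwf true m' t
  | relax (m t : Term (σ ⊕ σ) X) (h : Bnd hwf true m t) : Bnd hwf false m t

variable {hwf : WellFounded lt}

theorem Bnd.toFlag {m t : Term (σ ⊕ σ) X} (h : Bnd hwf true m t) (b : Bool) :
    Bnd hwf b m t := by
  cases b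
  · exact .relax _ _ h
  · exact h

/-! ### list helpers -/

theorem perm_rot {α : Type*} (a b c : List α) : (a ++ b ++ c).Perm (b ++ (a ++ c)) := by
  have h1 : ((a ++ b) ++ c).Perm ((b ++ a) ++ c) := List.perm_append_comm.append_right c
  simpa [List.append_assoc] using h1

theorem length_one_split {α : Type*} {l₁ l₂ : List α} {s : α}
    (h : (l₁ ++ s :: l₂).length = 1) : l₁ = [] ∧ l₂ = [] := by
  cases l₁ <;> simp_all

theorem mem_replace {α : Type*} {G₁ G₂ : List α} {p q r : α} (h : r ∈ G₁ ++ q :: G₂) :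
    r = q ∨ r ∈ G₁ ++ p :: G₂ := by
  rcases List.mem_append.1 h with h | h
  · exact Or.inr (List.mem_append.2 (Or.inl h))
  · rcases List.mem_cons.1 h with rfl | h
    · exact Or.inl rfl
    · exact Or.inr (List.mem_append.2 (Or.inr (List.mem_cons_of_mem _ h)))

theorem mem_middle {α : Type*} (G₁ G₂ : List α) (p : α) : p ∈ G₁ ++ p :: G₂ := by simp

theorem map_fst_replace {α β γ : Type*} (G₁ G₂ : List (α × β × γ)) (p : α × β × γ)
    (x : β × γ) : (G₁ ++ (p.1, x) :: G₂).map (fun q => q.1) =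
      (G₁ ++ p :: G₂).map (fun q => q.1) := by
  simp

theorem perm_surgery {α : Type*} {G : List (α × Bool × List α)} {pre post : List α} {s : α}
    (hts : (pre ++ s :: post).Perm (G.flatMap (fun p => p.2.2))) :
    ∃ G₁ p G₂ l₁ l₂, G = G₁ ++ p :: G₂ ∧ (p : α × Bool × List α).2.2 = l₁ ++ s :: l₂ ∧
      ∀ (rep : List α) (β : Bool), (pre ++ (rep ++ post)).Perm
        ((G₁ ++ (p.1, β, l₁ ++ (rep ++ l₂)) :: G₂).flatMap (fun q => q.2.2)) := by
  have hsmem : s ∈ G.flatMap (fun p => p.2.2) := hts.subset (by simp)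
  obtain ⟨p, hp, hs⟩ := List.mem_flatMap.1 hsmem
  obtain ⟨G₁, G₂, rfl⟩ := List.append_of_mem hp
  obtain ⟨l₁, l₂, hl⟩ := List.append_of_mem hs
  refine ⟨G₁, p, G₂, l₁, l₂, rfl, hl, ?_⟩
  set A := G₁.flatMap (fun p => p.2.2) with hA
  set B := G₂.flatMap (fun p => p.2.2) with hB
  have hflat : (G₁ ++ p :: G₂).flatMap (fun p => p.2.2) = (A ++ l₁) ++ s :: (l₂ ++ B) := by
    simp only [List.flatMap_append, List.flatMap_cons, hl, ← hA, ← hB, List.append_assoc,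
      List.cons_append]
  rw [hflat] at hts
  have hbase : (pre ++ post).Perm ((A ++ l₁) ++ (l₂ ++ B)) :=
    (List.perm_middle.symm.trans (hts.trans List.perm_middle)).cons_inv
  intro rep β
  have hflat' : (G₁ ++ (p.1, β, l₁ ++ (rep ++ l₂)) :: G₂).flatMap (fun q => q.2.2)
      = (A ++ l₁) ++ rep ++ (l₂ ++ B) := by
    simp only [List.flatMap_append, List.flatMap_cons, ← hA, ← hB, List.append_assoc]
  rw [hflat']
  calc pre ++ (rep ++ post) = pre ++ rep ++ post := by rw [List.append_assoc]
    _ ~ rep ++ (pre ++ post) := perm_rot pre rep post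
    _ ~ rep ++ ((A ++ l₁) ++ (l₂ ++ B)) := hbase.append_left rep
    _ ~ (A ++ l₁) ++ rep ++ (l₂ ++ B) := (perm_rot (A ++ l₁) rep (l₂ ++ B)).symm

/-! ### the `put` lemma -/

theorem Bnd.putStar {b : Bool} {m t : Term (σ ⊕ σ) X} (hB : Bnd hwf b m t) :
    ∀ {g : σ} {ys : List (Term (σ ⊕ σ) X)}, t = .app (.inl g) ys →
      Bnd hwf true m (.app (.inr g) ys) := by
  induction hB with
  | var x => intro g ys h; cases h
  | plain f G ts b hts h hw hb ih =>
    intro g ys heq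
    injection heq with h1 h2
    injection h1 with h1
    subst h1; subst h2
    exact .star f G ts hts h hw
  | star f G ts hts h hw =>
    intro g ys heq
    injection heq with h1 _
    cases h1
  | small f g ms ss hgf h ih =>
    intro g' ys heq
    injection heq with h1 h2
    injection h1 with h1
    subst h1; subst h2
    exact .smallStar f g ms ss hgf h
  | smallStar f g ms ss hgf h =>
    intro g' ys heq
    injection heq with h1 _
    cases h1
  | weaken b m m' t hm h ih => intro g ys heq; exact .weaken _ _ _ _ hm (ih heq)
  | strengthen b m m' t hm h ih => intro g ys heq; exact .weaken _ _ _ _ hm.le (ih heq)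
  | relax m t h ih => intro g ys heq; exact ih heq

end Bound

end StarGames
namespace StarGames

open Ordinal Order NaturalOps List

section Pres

variable {σ X : Type} {lt : σ → σ → Prop} {hwf : WellFounded lt}

/-- Combined root steps: `Star` roots together with swap roots. -/
def Root0 (lt : σ → σ → Prop) : Term (σ ⊕ σ) X → Term (σ ⊕ σ) X → Prop :=
  fun t u => StarRoot lt t u ∨ SwapRoot t u

theorem Rewrite.mono {σ₁ X₁ : Type} {R S : Term σ₁ X₁ → Term σ₁ X₁ → Prop}
    (hRS : ∀ a b, R a b → S a b) {a b : Term σ₁ X₁} (h : Rewrite R a b) :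
    Rewrite S a b := by
  induction h with
  | root hr => exact .root (hRS _ _ hr)
  | congr f pre post _ ih => exact .congr f pre post ih

theorem Bnd.congrRebuild {G : List (Term (σ ⊕ σ) X × Bool × List (Term (σ ⊕ σ) X))}
    {pre post : List (Term (σ ⊕ σ) X)} {s₀ u₀ : Term (σ ⊕ σ) X}
    (hts : (pre ++ s₀ :: post).Perm (G.flatMap fun p => p.2.2))
    (h : ∀ p ∈ G, ∀ t ∈ p.2.2, Bnd hwf p.2.1 p.1 t)
    (hw : ∀ p ∈ G, p.2.1 = false → p.2.2.length = 1)
    (hnew : ∀ p ∈ G, s₀ ∈ p.2.2 → Bnd hwf p.2.1 p.1 u₀) :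
    ∃ G' : List (Term (σ ⊕ σ) X × Bool × List (Term (σ ⊕ σ) X)),
      ((pre ++ u₀ :: post).Perm (G'.flatMap fun p => p.2.2)) ∧
      (∀ p ∈ G', ∀ t ∈ p.2.2, Bnd hwf p.2.1 p.1 t) ∧
      (∀ p ∈ G', p.2.1 = false → p.2.2.length = 1) ∧
      ((∃ p ∈ G, p.2.1 = true) → (∃ p ∈ G', p.2.1 = true)) ∧
      G'.map (fun p => p.1) = G.map (fun p => p.1) := by
  obtain ⟨G₁, p, G₂, l₁, l₂, hG, hl, hrep⟩ := perm_surgery hts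
  subst hG
  refine ⟨G₁ ++ (p.1, p.2.1, l₁ ++ ([u₀] ++ l₂)) :: G₂, hrep [u₀] p.2.1, ?_, ?_, ?_, by simp⟩
  · intro r hr t' ht'
    rcases mem_replace (p := p) hr with rfl | hrG
    · rcases List.mem_append.1 ht' with h' | h'
      · exact h p (mem_middle _ _ _) t' (by rw [hl]; exact List.mem_append.2 (Or.inl h'))
      · rcases List.mem_cons.1 h' with rfl | h'
        · exact hnew p (mem_middle _ _ _) (by rw [hl]; simp)
        · exact h p (mem_middle _ _ _) t'
            (by rw [hl]; exact List.mem_append.2 (Or.inr (List.mem_cons_of_mem _ h')))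
    · exact h r hrG t' ht'
  · intro r hr hflag
    rcases mem_replace (p := p) hr with rfl | hrG
    · have hlen := hw p (mem_middle _ _ _) hflag
      rw [hl] at hlen
      simpa using hlen
    · exact hw r hrG hflag
  · rintro ⟨r, hr, hflag⟩
    rcases mem_replace (p := (p.1, p.2.1, l₁ ++ ([u₀] ++ l₂))) hr with rfl | hrG
    · exact ⟨(r.1, r.2.1, l₁ ++ ([u₀] ++ l₂)), mem_middle _ _ _, hflag⟩
    · exact ⟨r, hrG, hflag⟩

theorem Bnd.pres (htrans : Transitive lt) {b : Bool} {m t : Term (σ ⊕ σ) X}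
    (hB : Bnd hwf b m t) : ∀ u, Rewrite (Root0 lt) t u → Bnd hwf b m u := by
  induction hB with
  | var x =>
    intro u hstep
    cases hstep with
    | root hr => rcases hr with hr | hr <;> cases hr
  | plain f G ts b hts h hw hb ih =>
    intro u hstep
    cases hstep with
    | root hr =>
      rcases hr with hr | hr
      · cases hr with
        | put f' ts' => exact (Bnd.star _ _ _ hts h hw).toFlag b
      · cases hr with
        | swap f₀ us x y ws =>
          exact Bnd.plain _ _ _ _
            ((List.Perm.append_left us (List.Perm.swap x y ws)).trans hts) h hw hb
    | congr f' pre post hinner =>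
      rename_i s₀ u₀
      obtain ⟨G', hts', h', hw', hbt, hmap⟩ :=
        Bnd.congrRebuild hts h hw (fun p hp hs => ih p hp s₀ hs u₀ hinner)
      have := Bnd.plain f G' (pre ++ u₀ :: post) b hts' h' hw' (fun hb' => hbt (hb hb'))
      rwa [hmap] at this
  | star f G ts hts h hw ih =>
    intro u hstep
    cases hstep with
    | root hr =>
      rcases hr with hr | hr
      · cases hr with
        | select f' xs y zs =>
          have hy : u ∈ G.flatMap (fun p => p.2.2) := hts.subset (by simp)
          obtain ⟨p, hp, hyp⟩ := List.mem_flatMap.1 hy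
          have hlt : tv hwf p.1 < tv hwf (Term.app (Sum.inl f) (G.map fun p => p.1)) :=
            tv_lt_app hwf (List.mem_map_of_mem hp)
          exact Bnd.strengthen _ _ _ _ hlt (h p hp u hyp)
        | copy f' g k ts' hgf =>
          refine Bnd.small f g _ _ hgf ?_
          intro s hs
          rw [List.eq_of_mem_replicate hs]
          exact Bnd.star f G ts hts h hw
        | down f' g k xs ys zs =>
          obtain ⟨G₁, p, G₂, l₁, l₂, hG, hl, hrep⟩ := perm_surgery hts
          subst hG
          have hpm : p ∈ G₁ ++ p :: G₂ := mem_middle _ _ _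
          have hchild : Bnd hwf p.2.1 p.1 (Term.app (Sum.inl g) ys) :=
            h p hpm _ (by rw [hl]; simp)
          have hstar : Bnd hwf true p.1 (Term.app (Sum.inr g) ys) := hchild.putStar rfl
          have h' : ∀ r ∈ G₁ ++ (p.1, true,
              l₁ ++ (List.replicate k (Term.app (Sum.inr g) ys) ++ l₂)) :: G₂,
              ∀ t' ∈ r.2.2, Bnd hwf r.2.1 r.1 t' := by
            intro r hr t' ht'
            rcases mem_replace (p := p) hr with rfl | hrG
            · have hmemor : t' ∈ List.replicate k (Term.app (Sum.inr g) ys) ∨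
                  (t' ∈ l₁ ∨ t' ∈ l₂) := by
                rcases List.mem_append.1 ht' with h' | h'
                · exact Or.inr (Or.inl h')
                · rcases List.mem_append.1 h' with h' | h'
                  · exact Or.inl h'
                  · exact Or.inr (Or.inr h')
              rcases hmemor with h' | h'
              · rw [List.eq_of_mem_replicate h']
                exact hstar
              · have ht'p : t' ∈ p.2.2 := by
                  rw [hl]
                  rcases h' with h' | h'
                  · exact List.mem_append.2 (Or.inl h')
                  · exact List.mem_append.2 (Or.inr (List.mem_cons_of_mem _ h'))
                cases hpf : p.2.1 with
                | true => exact hpf ▸ h p hpm t' ht'p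
                | false =>
                  exfalso
                  have hlen := hw p hpm hpf
                  rw [hl] at hlen
                  obtain ⟨rfl, rfl⟩ := length_one_split hlen
                  simp at h'
            · exact h r hrG t' ht'
          have hw' : ∀ r ∈ G₁ ++ (p.1, true,
              l₁ ++ (List.replicate k (Term.app (Sum.inr g) ys) ++ l₂)) :: G₂,
              r.2.1 = false → r.2.2.length = 1 := by
            intro r hr hflag
            rcases mem_replace (p := p) hr with rfl | hrG
            · simp at hflag
            · exact hw r hrG hflag
          have hts' := hrep (List.replicate k (Term.app (Sum.inr g) ys)) true
          have hmain := Bnd.plain f _ _ true hts' h' hw'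
            (fun _ => ⟨_, mem_middle _ _ _, rfl⟩)
          have hmap : (G₁ ++ (p.1, true,
              l₁ ++ (List.replicate k (Term.app (Sum.inr g) ys) ++ l₂)) :: G₂).map
                (fun r => r.1) = (G₁ ++ p :: G₂).map (fun r => r.1) := by simp
          rw [hmap] at hmain
          rwa [← List.append_assoc] at hmain
      · cases hr with
        | swap f₀ us x y ws =>
          exact Bnd.star _ _ _
            ((List.Perm.append_left us (List.Perm.swap x y ws)).trans hts) h hw
    | congr f' pre post hinner =>
      rename_i s₀ u₀
      obtain ⟨G', hts', h', hw', _, hmap⟩ :=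
        Bnd.congrRebuild hts h hw (fun p hp hs => ih p hp s₀ hs u₀ hinner)
      have := Bnd.star f G' (pre ++ u₀ :: post) hts' h' hw'
      rwa [hmap] at this
  | small f g ms ss hgf h ih =>
    intro u hstep
    cases hstep with
    | root hr =>
      rcases hr with hr | hr
      · cases hr with
        | put g' ss' => exact Bnd.smallStar f g ms ss hgf h
      · cases hr with
        | swap f₀ us x y ws =>
          refine Bnd.small f g ms _ hgf ?_
          intro s hs
          apply h
          simp only [List.mem_append, List.mem_cons] at hs ⊢
          tauto
    | congr f' pre post hinner =>
      rename_i s₀ u₀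
      refine Bnd.small f g ms _ hgf ?_
      intro s hs
      rcases List.mem_append.1 hs with h' | h'
      · exact h s (List.mem_append.2 (Or.inl h'))
      · rcases List.mem_cons.1 h' with rfl | h'
        · exact ih s₀ (by simp) _ hinner
        · exact h s (List.mem_append.2 (Or.inr (List.mem_cons_of_mem _ h')))
  | smallStar f g ms ss hgf h ih =>
    intro u hstep
    cases hstep with
    | root hr =>
      rcases hr with hr | hr
      · cases hr with
        | select g' xs y zs => exact h u (by simp)
        | copy g' g'' k ts' hg'' =>
          refine Bnd.small f g'' ms _ (htrans hg'' hgf) ?_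
          intro s hs
          rw [List.eq_of_mem_replicate hs]
          exact Bnd.smallStar f g ms ss hgf h
        | down g' g₀ k xs ys zs =>
          refine Bnd.small f g ms _ hgf ?_
          intro s hs
          rcases List.mem_append.1 hs with h' | h'
          · rcases List.mem_append.1 h' with h' | h'
            · exact h s (List.mem_append.2 (Or.inl h'))
            · rw [List.eq_of_mem_replicate h']
              exact (h _ (by simp)).putStar rfl
          · exact h s (by simp [h'])
      · cases hr with
        | swap f₀ us x y ws =>
          refine Bnd.smallStar f g ms _ hgf ?_
          intro s hs
          apply h
          simp only [List.mem_append, List.mem_cons] at hs ⊢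
          tauto
    | congr f' pre post hinner =>
      rename_i s₀ u₀
      refine Bnd.smallStar f g ms _ hgf ?_
      intro s hs
      rcases List.mem_append.1 hs with h' | h'
      · exact h s (List.mem_append.2 (Or.inl h'))
      · rcases List.mem_cons.1 h' with rfl | h'
        · exact ih s₀ (by simp) _ hinner
        · exact h s (List.mem_append.2 (Or.inr (List.mem_cons_of_mem _ h')))
  | weaken b m m' t hm hin ih =>
    intro u hstep
    exact .weaken _ _ _ _ hm (ih u hstep)
  | strengthen b m m' t hm hin ih =>
    intro u hstep
    exact .strengthen _ _ _ _ hm (ih u hstep)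
  | relax m t hin ih =>
    intro u hstep
    exact .relax _ _ (ih u hstep)

theorem Bnd.presStar (htrans : Transitive lt) {b : Bool} {m t u : Term (σ ⊕ σ) X}
    (hB : Bnd hwf b m t) (hstep : Rewrite (StarRoot lt) t u) : Bnd hwf b m u :=
  hB.pres htrans u (hstep.mono (fun _ _ h => Or.inl h))

theorem Bnd.presSwap (htrans : Transitive lt) {b : Bool} {m t u : Term (σ ⊕ σ) X}
    (hB : Bnd hwf b m t) (hstep : SwapStep t u) : Bnd hwf b m u :=
  hB.pres htrans u (hstep.mono (fun _ _ h => Or.inr h))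

end Pres

end StarGames
namespace StarGames

open Ordinal Order NaturalOps List

section Ext

variable {σ X : Type} {lt : σ → σ → Prop} {hwf : WellFounded lt}

theorem StarFreeTerm.head {s : σ ⊕ σ} {ts : List (Term (σ ⊕ σ) X)}
    (h : StarFreeTerm (.app s ts)) : ∃ f : σ, s = Sum.inl f := by
  cases h with | app _ _ hp _ => exact hp

theorem StarFreeTerm.children {s : σ ⊕ σ} {ts : List (Term (σ ⊕ σ) X)}
    (h : StarFreeTerm (.app s ts)) : ∀ t ∈ ts, StarFreeTerm t := by
  cases h with | app _ _ _ hc => exact hc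

theorem StarFreeTerm.not_inr {f : σ} {ts : List (Term (σ ⊕ σ) X)}
    (h : StarFreeTerm (.app (Sum.inr f) ts)) : False := by
  obtain ⟨f', hf⟩ := h.head
  cases hf

theorem map_fst_triv {α : Type*} (l : List α) :
    (l.map fun t => (t, false, ([t] : List α))).map (fun p => p.1) = l := by
  induction l with
  | nil => rfl
  | cons a l ih => simp [ih]

theorem map_fst_triv' {α : Type*} (l : List α) :
    l.map ((fun (p : α × Bool × List α) => p.1) ∘ fun t => (t, false, ([t] : List α))) = l := by
  induction l with
  | nil => rfl
  | cons a l ih => simp [ih]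

theorem flatMap_triv {α : Type*} (l : List α) :
    (l.map fun t => (t, false, ([t] : List α))).flatMap (fun p => p.2.2) = l := by
  induction l with
  | nil => simp
  | cons a l ih => simp_all

theorem mem_triv {α : Type*} {l : List α} {p : α × Bool × List α}
    (hp : p ∈ l.map fun t => (t, false, ([t] : List α))) :
    ∃ t ∈ l, p = (t, false, [t]) := by
  obtain ⟨t, ht, rfl⟩ := List.mem_map.1 hp
  exact ⟨t, ht, rfl⟩

theorem Bnd.refl {t : Term (σ ⊕ σ) X} (h : StarFreeTerm t) : Bnd hwf false t t := by
  induction h with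
  | var x => exact .var x
  | app s ts hp hc ih =>
    obtain ⟨f, rfl⟩ := hp
    have hmem : ∀ p ∈ (ts.map fun t => (t, false, ([t] : List (Term (σ ⊕ σ) X)))),
        ∀ t' ∈ p.2.2, Bnd hwf p.2.1 p.1 t' := by
      intro p hp' t' ht'
      obtain ⟨t, ht, rfl⟩ := mem_triv hp'
      simp only [List.mem_singleton] at ht'
      subst ht'
      exact ih t' ht
    have hww : ∀ p ∈ (ts.map fun t => (t, false, ([t] : List (Term (σ ⊕ σ) X)))),
        p.2.1 = false → p.2.2.length = 1 := by
      intro p hp' _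
      obtain ⟨t, ht, rfl⟩ := mem_triv hp'
      rfl
    have hmain := Bnd.plain f (ts.map fun t => (t, false, [t])) ts false
      (by rw [flatMap_triv]) hmem hww (by simp)
    have hmap : (ts.map fun t => (t, false, ([t] : List (Term (σ ⊕ σ) X)))).map
        (fun p => p.1) = ts := map_fst_triv ts
    rwa [hmap] at hmain

theorem Bnd.firstStep {t u : Term (σ ⊕ σ) X} (hsf : StarFreeTerm t)
    (hstep : Rewrite (StarRoot lt) t u) : Bnd hwf true t u := by
  induction hstep with
  | root hr =>
    cases hr with
    | put f ts =>
      have hc := hsf.children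
      have hmem : ∀ p ∈ (ts.map fun t => (t, false, ([t] : List (Term (σ ⊕ σ) X)))),
          ∀ t' ∈ p.2.2, Bnd hwf p.2.1 p.1 t' := by
        intro p hp' t' ht'
        obtain ⟨t, ht, rfl⟩ := mem_triv hp'
        simp only [List.mem_singleton] at ht'
        subst ht'
        exact Bnd.refl (hc t' ht)
      have hww : ∀ p ∈ (ts.map fun t => (t, false, ([t] : List (Term (σ ⊕ σ) X)))),
          p.2.1 = false → p.2.2.length = 1 := by
        intro p hp' _
        obtain ⟨t, ht, rfl⟩ := mem_triv hp'
        rfl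
      have hmain := Bnd.star f (ts.map fun t => (t, false, [t])) ts
        (by rw [flatMap_triv]) hmem hww
      have hmap : (ts.map fun t => (t, false, ([t] : List (Term (σ ⊕ σ) X)))).map
          (fun p => p.1) = ts := map_fst_triv ts
      rwa [hmap] at hmain
    | select f xs y zs => exact hsf.not_inr.elim
    | copy f g k ts hgf => exact hsf.not_inr.elim
    | down f g k xs ys zs => exact hsf.not_inr.elim
  | congr f pre post hinner ih =>
    rename_i s₀ u₀
    obtain ⟨f', rfl⟩ := hsf.head
    have hc := hsf.children
    have hBs : Bnd hwf true s₀ u₀ := ih (hc s₀ (by simp))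
    have hflat : ((pre.map fun t => (t, false, ([t] : List (Term (σ ⊕ σ) X)))) ++
        (s₀, true, ([u₀] : List (Term (σ ⊕ σ) X))) ::
          (post.map fun t => (t, false, [t]))).flatMap (fun p => p.2.2)
        = pre ++ u₀ :: post := by
      simp [List.flatMap_append, List.flatMap_cons, flatMap_triv]
    have hmem : ∀ p ∈ ((pre.map fun t => (t, false, ([t] : List (Term (σ ⊕ σ) X)))) ++
        (s₀, true, ([u₀] : List (Term (σ ⊕ σ) X))) ::
          (post.map fun t => (t, false, [t]))),
        ∀ t' ∈ p.2.2, Bnd hwf p.2.1 p.1 t' := by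
      intro p hp' t' ht'
      rcases List.mem_append.1 hp' with h' | h'
      · obtain ⟨t, ht, rfl⟩ := mem_triv h'
        simp only [List.mem_singleton] at ht'
        subst ht'
        exact Bnd.refl (hc t' (List.mem_append.2 (Or.inl ht)))
      · rcases List.mem_cons.1 h' with rfl | h'
        · simp only [List.mem_singleton] at ht'
          subst ht'
          exact hBs
        · obtain ⟨t, ht, rfl⟩ := mem_triv h'
          simp only [List.mem_singleton] at ht'
          subst ht'
          exact Bnd.refl (hc t' (List.mem_append.2 (Or.inr (List.mem_cons_of_mem _ ht))))
    have hww : ∀ p ∈ ((pre.map fun t => (t, false, ([t] : List (Term (σ ⊕ σ) X)))) ++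
        (s₀, true, ([u₀] : List (Term (σ ⊕ σ) X))) ::
          (post.map fun t => (t, false, [t]))),
        p.2.1 = false → p.2.2.length = 1 := by
      intro p hp' hflag
      rcases List.mem_append.1 hp' with h' | h'
      · obtain ⟨t, ht, rfl⟩ := mem_triv h'; rfl
      · rcases List.mem_cons.1 h' with rfl | h'
        · simp at hflag
        · obtain ⟨t, ht, rfl⟩ := mem_triv h'; rfl
    have hmain := Bnd.plain f' _ (pre ++ u₀ :: post) true (by rw [hflat]) hmem hww
      (fun _ => ⟨(s₀, true, [u₀]), by simp, rfl⟩)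
    have hmap : ((pre.map fun t => (t, false, ([t] : List (Term (σ ⊕ σ) X)))) ++
        (s₀, true, ([u₀] : List (Term (σ ⊕ σ) X))) ::
          (post.map fun t => (t, false, [t]))).map (fun p => p.1)
        = pre ++ s₀ :: post := by
      simp only [List.map_append, List.map_cons, List.map_map]
      rw [map_fst_triv', map_fst_triv']
    rwa [hmap] at hmain

theorem sumN_groups (G : List (Term (σ ⊕ σ) X × Bool × List (Term (σ ⊕ σ) X)))
    (h1 : ∀ p ∈ G, ∀ t ∈ p.2.2, tv hwf t ≤ tv hwf p.1 ∧
      (p.2.1 = true → tv hwf t < tv hwf p.1))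
    (hw : ∀ p ∈ G, p.2.1 = false → p.2.2.length = 1) :
    sumN ((G.flatMap (fun p => p.2.2)).map (tv hwf)) ≤
      sumN ((G.map (fun p => p.1)).map (tv hwf)) ∧
    ((∃ p ∈ G, p.2.1 = true) →
      sumN ((G.flatMap (fun p => p.2.2)).map (tv hwf)) <
        sumN ((G.map (fun p => p.1)).map (tv hwf))) := by
  induction G with
  | nil =>
    refine ⟨le_rfl, ?_⟩
    rintro ⟨p, hp, _⟩
    simp at hp
  | cons p G ihG =>
    have hgle : sumN (p.2.2.map (tv hwf)) ≤ tv hwf p.1 ∧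
        (p.2.1 = true → sumN (p.2.2.map (tv hwf)) < tv hwf p.1) := by
      cases hpf : p.2.1 with
      | true =>
        have hstrict : sumN (p.2.2.map (tv hwf)) < tv hwf p.1 := by
          apply sumN_lt (tv_pos hwf p.1) (tv_indec hwf p.1)
          intro x hx
          obtain ⟨t', ht', rfl⟩ := List.mem_map.1 hx
          exact (h1 p (by simp) t' ht').2 hpf
        exact ⟨hstrict.le, fun _ => hstrict⟩
      | false =>
        obtain ⟨t', ht'⟩ := List.length_eq_one_iff.1 (hw p (by simp) hpf)
        rw [ht']
        have hle := (h1 p (by simp) t' (by simp [ht'])).1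
        constructor
        · simpa [sumN, nadd_zero] using hle
        · intro hcontr
          exact absurd hcontr (by simp)
    have hrest := ihG (fun q hq => h1 q (by simp [hq])) (fun q hq => hw q (by simp [hq]))
    have e1 : sumN (((p :: G).flatMap fun p => p.2.2).map (tv hwf))
        = sumN (p.2.2.map (tv hwf)) ♯ sumN ((G.flatMap fun p => p.2.2).map (tv hwf)) := by
      simp [List.flatMap_cons, List.map_append, sumN_append]
    have e2 : sumN (((p :: G).map fun p => p.1).map (tv hwf))
        = tv hwf p.1 ♯ sumN ((G.map fun p => p.1).map (tv hwf)) := by simp [sumN]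
    rw [e1, e2]
    constructor
    · exact nadd_le_nadd hgle.1 hrest.1
    · rintro ⟨q, hq, hqt⟩
      rcases List.mem_cons.1 hq with rfl | hq
      · exact nadd_lt_nadd_of_lt_of_le (hgle.2 hqt) hrest.1
      · exact nadd_lt_nadd_of_le_of_lt hgle.1 (hrest.2 ⟨q, hq, hqt⟩)

theorem Bnd.ext {b : Bool} {m t : Term (σ ⊕ σ) X} (hB : Bnd hwf b m t) :
    StarFreeTerm t → tv hwf t ≤ tv hwf m ∧ (b = true → tv hwf t < tv hwf m) := by
  induction hB with
  | var x => intro _; exact ⟨le_rfl, by simp⟩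
  | plain f G ts b hts h hw hb ih =>
    intro hsf
    have hch := hsf.children
    have h1 : ∀ p ∈ G, ∀ t' ∈ p.2.2, tv hwf t' ≤ tv hwf p.1 ∧
        (p.2.1 = true → tv hwf t' < tv hwf p.1) := by
      intro p hp t' ht'
      exact ih p hp t' ht' (hch t' (hts.symm.subset (List.mem_flatMap.2 ⟨p, hp, ht'⟩)))
    have hsum := sumN_groups G h1 hw
    have hsp : sumN (ts.map (tv hwf)) = sumN ((G.flatMap fun p => p.2.2).map (tv hwf)) :=
      sumN_perm (hts.map (tv hwf))
    constructor
    · rw [tv_app, tv_app]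
      simp only [Sum.elim_inl, id_eq]
      apply (isNormal_Phi hwf f).strictMono.monotone
      apply nadd_le_nadd_left
      rw [hsp]; exact hsum.1
    · intro hbt
      rw [tv_app, tv_app]
      simp only [Sum.elim_inl, id_eq]
      apply (isNormal_Phi hwf f).strictMono
      apply nadd_lt_nadd_left
      rw [hsp]; exact hsum.2 (hb hbt)
  | star f G ts hts h hw ih => intro hsf; exact hsf.not_inr.elim
  | small f g ms ss hgf h ih =>
    intro hsf
    have hch := hsf.children
    have hV : tv hwf (Term.app (Sum.inl g) ss) < tv hwf (Term.app (Sum.inl f) ms) := by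
      have hfix : Phi hwf g (tv hwf (Term.app (Sum.inl f) ms))
          = tv hwf (Term.app (Sum.inl f) ms) := by
        conv_lhs => rw [tv_app]
        conv_rhs => rw [tv_app]
        simp only [Sum.elim_inl, id_eq]
        exact Phi_fp hwf hgf _
      conv_lhs => rw [tv_app]
      simp only [Sum.elim_inl, id_eq]
      have hlt1 : 1 ♯ sumN (ss.map (tv hwf)) < tv hwf (Term.app (Sum.inl f) ms) := by
        apply tv_indec hwf (Term.app (Sum.inl f) ms) 1 (one_lt_tv_app hwf _ _)
        apply sumN_lt (tv_pos hwf _) (tv_indec hwf _)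
        intro x hx
        obtain ⟨t', ht', rfl⟩ := List.mem_map.1 hx
        exact (ih t' ht' (hch t' ht')).2 rfl
      calc Phi hwf g (1 ♯ sumN (ss.map (tv hwf)))
          < Phi hwf g (tv hwf (Term.app (Sum.inl f) ms)) :=
            (isNormal_Phi hwf g).strictMono hlt1
        _ = _ := hfix
    exact ⟨hV.le, fun _ => hV⟩
  | smallStar f g ms ss hgf h ih => intro hsf; exact hsf.not_inr.elim
  | weaken b m m' t hm hin ih =>
    intro hsf
    exact ⟨(ih hsf).1.trans hm, fun hbt => ((ih hsf).2 hbt).trans_le hm⟩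
  | strengthen b m m' t hm hin ih =>
    intro hsf
    exact ⟨((ih hsf).1.trans_lt hm).le, fun _ => (ih hsf).1.trans_lt hm⟩
  | relax m t hin ih =>
    intro hsf
    exact ⟨(ih hsf).1, by simp⟩

end Ext

end StarGames
namespace StarGames

open Ordinal Order NaturalOps List

section Chain

variable {σ X : Type} {lt : σ → σ → Prop} {hwf : WellFounded lt}

theorem swapRewrite_symm {t u : Term (σ ⊕ σ) X} (h : Rewrite SwapRoot t u) :
    Rewrite SwapRoot u t := by
  induction h with
  | root hr =>
    cases hr with
    | swap f us x y ws => exact .root (SwapRoot.swap f us y x ws)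
  | congr f pre post _ ih => exact .congr f pre post ih

theorem StarFreeTerm.presSwap {t u : Term (σ ⊕ σ) X} (h : Rewrite SwapRoot t u)
    (hsf : StarFreeTerm t) : StarFreeTerm u := by
  induction h with
  | root hr =>
    cases hr with
    | swap f us x y ws =>
      obtain ⟨f', rfl⟩ := hsf.head
      refine Uses.app _ _ ⟨f', rfl⟩ ?_
      intro t' ht'
      apply hsf.children
      simp only [List.mem_append, List.mem_cons] at ht' ⊢
      tauto
  | congr f pre post hinner ih =>
    rename_i s₀ u₀
    obtain ⟨f', rfl⟩ := hsf.head
    refine Uses.app _ _ ⟨f', rfl⟩ ?_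
    intro t' ht'
    rcases List.mem_append.1 ht' with h' | h'
    · exact hsf.children _ (List.mem_append.2 (Or.inl h'))
    · rcases List.mem_cons.1 h' with rfl | h'
      · exact ih (hsf.children s₀ (by simp))
      · exact hsf.children _ (List.mem_append.2 (Or.inr (List.mem_cons_of_mem _ h')))

theorem TermEquiv.starFree_iff {t u : Term (σ ⊕ σ) X} (h : TermEquiv t u) :
    StarFreeTerm t ↔ StarFreeTerm u := by
  induction h with
  | rel a b hab =>
    exact ⟨fun hs => StarFreeTerm.presSwap hab hs,
      fun hs => StarFreeTerm.presSwap (swapRewrite_symm hab) hs⟩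
  | refl a => exact Iff.rfl
  | symm a b _ ih => exact ih.symm
  | trans a b c _ _ ih1 ih2 => exact ih1.trans ih2

theorem tv_presSwap {t u : Term (σ ⊕ σ) X} (h : Rewrite SwapRoot t u) :
    tv hwf t = tv hwf u := by
  induction h with
  | root hr =>
    cases hr with
    | swap f us x y ws =>
      rw [tv_app, tv_app]
      congr 2
      apply sumN_perm
      exact (List.Perm.append_left us (List.Perm.swap x y ws)).symm.map _
  | congr f pre post hinner ih =>
    rw [tv_app, tv_app]
    congr 3
    simp [List.map_append, ih]

theorem TermEquiv.tv_eq {t u : Term (σ ⊕ σ) X} (h : TermEquiv t u) :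
    tv hwf t = tv hwf u := by
  induction h with
  | rel a b hab => exact tv_presSwap hab
  | refl a => rfl
  | symm _ _ _ ih => exact ih.symm
  | trans _ _ _ _ _ ih1 ih2 => exact ih1.trans ih2

theorem SwapStep.symm' {t u : Term (σ ⊕ σ) X} (h : SwapStep t u) : SwapStep u t :=
  swapRewrite_symm (t := t) (u := u) h

theorem TermEquiv.rtg {t u : Term (σ ⊕ σ) X} (h : TermEquiv t u) :
    Relation.ReflTransGen SwapStep t u := by
  induction h with
  | rel a b hab => exact Relation.ReflTransGen.single hab
  | refl a => exact Relation.ReflTransGen.refl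
  | symm a b hab ih =>
    have hsymm : Symmetric (SwapStep (σ := σ ⊕ σ) (X := X)) :=
      fun x y hs => swapRewrite_symm (t := x) (u := y) hs
    exact (letI : Std.Symm (SwapStep (σ := σ ⊕ σ) (X := X)) := ⟨hsymm⟩; Std.Symm.symm _ _ ih)
  | trans a b c _ _ ih1 ih2 => exact ih1.trans ih2

theorem Bnd.presEquiv (htrans : Transitive lt) {b : Bool} {m t u : Term (σ ⊕ σ) X}
    (hB : Bnd hwf b m t) (h : TermEquiv t u) : Bnd hwf b m u := by
  have hrtg := h.rtg
  clear h
  induction hrtg with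
  | refl => exact hB
  | tail _ hstep ih => exact ih.presSwap htrans hstep

theorem Bnd.chain (htrans : Transitive lt) {a : Term (σ ⊕ σ) X} (ha : StarFreeTerm a) :
    ∀ {B : Tree (σ ⊕ σ) X}, Relation.TransGen (StarTree lt) (Tree.mk a) B →
      ∃ b, B = Tree.mk b ∧ Bnd hwf true a b := by
  intro B h
  induction h with
  | single hstep =>
    obtain ⟨s, t, hs, hB, hst⟩ := hstep
    have hequiv : TermEquiv a s := Quotient.exact hs
    have hsf_s : StarFreeTerm s := hequiv.starFree_iff.1 ha
    refine ⟨t, hB, ?_⟩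
    exact Bnd.weaken _ _ _ _ (le_of_eq (hequiv.tv_eq (hwf := hwf)).symm)
      (Bnd.firstStep hsf_s hst)
  | tail _ hstep ih =>
    obtain ⟨b', hB', hBnd⟩ := ih
    obtain ⟨s, t, hs, hB, hst⟩ := hstep
    have hmk : Tree.mk b' = Tree.mk s := hB'.symm.trans hs
    have hequiv : TermEquiv b' s := Quotient.exact hmk
    exact ⟨t, hB, (hBnd.presEquiv htrans hequiv).presStar htrans hst⟩

end Chain

end StarGames
namespace StarGames

/-- Let `(Σ, <)` be a well-founded partial order (the precedence).  Then `▷⁺`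
restricted to star-free trees is strongly normalizing: there is no infinite
sequence `t₀, t₁, t₂, …` of star-free trees over `Σ` with `tᵢ ▷⁺ tᵢ₊₁` for all `i`. -/
theorem star_transGen_sn_on_starfree_trees
    {σ X : Type} [Countable X] [Infinite X]
    (lt : σ → σ → Prop) (hirr : Irreflexive lt) (htrans : Transitive lt)
    (hwf : WellFounded lt) :
    ¬ ∃ f : ℕ → Tree (σ ⊕ σ) X,
        (∀ n : ℕ, StarFreeTree (f n)) ∧
        (∀ n : ℕ, Relation.TransGen (StarTree lt) (f n) (f (n + 1))) := by
  rintro ⟨F, hsf, hstep⟩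
  classical
  obtain ⟨t0, h0, hsf0⟩ := hsf 0
  have succ_ex : ∀ (n : ℕ) (a : Term (σ ⊕ σ) X), F n = Tree.mk a → StarFreeTerm a →
      ∃ b, F (n + 1) = Tree.mk b ∧ StarFreeTerm b ∧ tv hwf b < tv hwf a := by
    intro n a hfa hsfa
    obtain ⟨b, hb, hBnd⟩ := Bnd.chain (hwf := hwf) htrans hsfa (hfa ▸ hstep n)
    obtain ⟨t', ht', hsft'⟩ := hsf (n + 1)
    have hequiv : TermEquiv t' b := Quotient.exact (ht'.symm.trans hb)
    have hsfb : StarFreeTerm b := hequiv.starFree_iff.1 hsft'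
    exact ⟨b, hb, hsfb, (hBnd.ext hsfb).2 rfl⟩
  let g : ∀ n : ℕ, {a : Term (σ ⊕ σ) X // F n = Tree.mk a ∧ StarFreeTerm a} :=
    fun n => Nat.rec ⟨t0, h0, hsf0⟩
      (fun n p => ⟨(succ_ex n p.1 p.2.1 p.2.2).choose,
        (succ_ex n p.1 p.2.1 p.2.2).choose_spec.1,
        (succ_ex n p.1 p.2.1 p.2.2).choose_spec.2.1⟩) n
  have hdec : ∀ n, tv hwf (g (n + 1)).1 < tv hwf (g n).1 := fun n =>
    (succ_ex n (g n).1 (g n).2.1 (g n).2.2).choose_spec.2.2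
  obtain ⟨o, ⟨k, hk⟩, hmin⟩ := Ordinal.lt_wf.has_min
    (Set.range fun n => tv hwf (g n).1) ⟨_, 0, rfl⟩
  exact hmin _ ⟨k + 1, rfl⟩ (hk ▸ hdec k)

end StarGames
end

section
/- Let (Σ, <) be a well-founded partial order. If R is a binary relation on star-free trees over Σ with R ⊆ ▷+, then R is strongly normalizing (termination by simulation). -/
namespace StarGames

variable {σ σ' X : Type}

namespace Aux

open List

/-! ### List helpers -/

theorem forall₂_perm_right {α β : Type*} {R : α → β → Prop} :
    ∀ {a : List α} {b b' : List β}, b.Perm b' → Forall₂ R a b → ∃ a', a.Perm a' ∧ Forall₂ R a' b' := by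
  intro a b b' hp
  induction hp generalizing a with
  | nil => exact fun h => ⟨a, .refl a, by cases h; exact .nil⟩
  | cons x h ih =>
    intro hf
    cases hf with
    | cons hR hf =>
      obtain ⟨a', hp', hf'⟩ := ih hf
      exact ⟨_ :: a', (hp'.cons _), .cons hR hf'⟩
  | swap x y l =>
    intro hf
    cases hf with
    | cons h1 hf1 =>
      cases hf1 with
      | cons h2 hf2 =>
        exact ⟨_ :: _ :: _, List.Perm.swap _ _ _, .cons h2 (.cons h1 hf2)⟩
  | trans h1 h2 ih1 ih2 =>
    intro hf
    obtain ⟨a1, hp1, hf1⟩ := ih1 hf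
    obtain ⟨a2, hp2, hf2⟩ := ih2 hf1
    exact ⟨a2, hp1.trans hp2, hf2⟩

theorem forall₂_trans {α β γ : Type*} {R : α → β → Prop} {S : β → γ → Prop} {T : α → γ → Prop}
    (h : ∀ {a b c}, R a b → S b c → T a c) :
    ∀ {a : List α} {b : List β} {c : List γ}, Forall₂ R a b → Forall₂ S b c → Forall₂ T a c := by
  intro a b c h1
  induction h1 generalizing c with
  | nil => intro h2; cases h2; exact .nil
  | cons hR h1 ih =>
    intro h2
    cases h2 with
    | cons hS h2 => exact .cons (h hR hS) (ih h2)

theorem forall₂_mem_right {α β : Type*} {R : α → β → Prop} :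
    ∀ {a : List α} {b : List β}, Forall₂ R a b → ∀ {t}, t ∈ b → ∃ m ∈ a, R m t := by
  intro a b h
  induction h with
  | nil => intro t ht; cases ht
  | cons hR h ih =>
    intro t ht
    cases ht with
    | head => exact ⟨_, mem_cons_self, hR⟩
    | tail _ ht =>
      obtain ⟨m, hm, hRm⟩ := ih ht
      exact ⟨m, mem_cons_of_mem _ hm, hRm⟩

theorem forall₂_mem_left {α β : Type*} {R : α → β → Prop} :
    ∀ {a : List α} {b : List β}, Forall₂ R a b → ∀ {m}, m ∈ a → ∃ t ∈ b, R m t := by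
  intro a b h
  induction h with
  | nil => intro t ht; cases ht
  | cons hR h ih =>
    intro t ht
    cases ht with
    | head => exact ⟨_, mem_cons_self, hR⟩
    | tail _ ht =>
      obtain ⟨m, hm, hRm⟩ := ih ht
      exact ⟨m, mem_cons_of_mem _ hm, hRm⟩

/-- extract an entry with given first component from a list of pairs, up to permutation -/
theorem extract_fst {α β : Type*} {c : α} :
    ∀ {N : List (α × β)}, c ∈ N.map Prod.fst → ∃ p N', p.1 = c ∧ N.Perm (p :: N') := by
  intro N
  induction N with
  | nil => intro h; cases h
  | cons hd tl ih =>
    intro h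
    rcases mem_map.1 h with ⟨p, hp, hpc⟩
    rcases mem_cons.1 hp with hpq | hp
    · exact ⟨hd, tl, hpq ▸ hpc, .refl _⟩
    · obtain ⟨p', N', h1, h2⟩ := ih (mem_map.2 ⟨p, hp, hpc⟩)
      exact ⟨p', hd :: N', h1, ((h2.cons hd).trans (List.Perm.swap _ _ _))⟩

/-! ### TermEquiv machinery -/

theorem swapRoot_symm {s t : Term σ X} (h : SwapRoot s t) : SwapRoot t s := by
  cases h with
  | swap f us x y ws => exact .swap f us y x ws

theorem swapStep_symm {s t : Term σ X} (h : SwapStep s t) : SwapStep t s := by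
  induction h with
  | root h => exact .root (swapRoot_symm h)
  | congr f pre post _ ih => exact .congr f pre post ih

theorem te_refl (t : Term σ X) : TermEquiv t t := Relation.EqvGen.refl t
theorem te_symm {s t : Term σ X} (h : TermEquiv s t) : TermEquiv t s := Relation.EqvGen.symm _ _ h
theorem te_trans {s t u : Term σ X} (h1 : TermEquiv s t) (h2 : TermEquiv t u) : TermEquiv s u :=
  Relation.EqvGen.trans _ _ _ h1 h2

theorem te_congr {s t : Term σ X} (f : σ) (pre post : List (Term σ X)) (h : TermEquiv s t) :
    TermEquiv (Term.app f (pre ++ s :: post)) (Term.app f (pre ++ t :: post)) := by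
  induction h with
  | rel x y hxy => exact Relation.EqvGen.rel _ _ (.congr f pre post hxy)
  | refl x => exact te_refl _
  | symm x y _ ih => exact te_symm ih
  | trans x y z _ _ ih1 ih2 => exact te_trans ih1 ih2

theorem te_perm_aux {us ts : List (Term σ X)} (h : us.Perm ts) :
    ∀ (f : σ) (pre : List (Term σ X)), TermEquiv (Term.app f (pre ++ us)) (Term.app f (pre ++ ts)) := by
  induction h with
  | nil => exact fun f pre => te_refl _
  | cons x h ih =>
    intro f pre
    have := ih f (pre ++ [x])
    simpa [List.append_assoc] using this
  | swap x y l =>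
    intro f pre
    exact Relation.EqvGen.rel _ _ (.root (SwapRoot.swap f pre y x l))
  | trans h1 h2 ih1 ih2 => exact fun f pre => te_trans (ih1 f pre) (ih2 f pre)

theorem te_perm {us ts : List (Term σ X)} (f : σ) (h : us.Perm ts) :
    TermEquiv (Term.app f us) (Term.app f ts) := by
  simpa using te_perm_aux h f []

theorem te_pointwise_aux :
    ∀ {us ts : List (Term σ X)}, Forall₂ TermEquiv us ts →
      ∀ (f : σ) (pre : List (Term σ X)), TermEquiv (Term.app f (pre ++ us)) (Term.app f (pre ++ ts)) := by
  intro us ts h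
  induction h with
  | nil => exact fun f pre => te_refl _
  | @cons a b l1 l2 hab h ih =>
    intro f pre
    have h1 : TermEquiv (Term.app f (pre ++ a :: l1)) (Term.app f (pre ++ b :: l1)) :=
      te_congr f pre l1 hab
    have h2 := ih f (pre ++ [b])
    simp only [List.append_assoc, List.singleton_append] at h2
    exact te_trans h1 h2

theorem te_app {us mid ts : List (Term σ X)} (f : σ) (hp : us.Perm mid)
    (hf : Forall₂ TermEquiv mid ts) : TermEquiv (Term.app f us) (Term.app f ts) := by
  refine te_trans (te_perm f hp) ?_
  simpa using te_pointwise_aux hf f []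

theorem forall₂_symm_te : ∀ {a b : List (Term σ X)}, Forall₂ TermEquiv a b → Forall₂ TermEquiv b a := by
  intro a b h
  induction h with
  | nil => exact .nil
  | cons hR h ih => exact .cons (te_symm hR) ih

/-- structural characterization of `TermEquiv` -/
def TEInv (u w : Term σ X) : Prop :=
  (∃ x, u = Term.var x ∧ w = Term.var x) ∨
  (∃ f us ws mid, u = Term.app f us ∧ w = Term.app f ws ∧ us.Perm mid ∧ Forall₂ TermEquiv mid ws)

theorem teInv_refl (t : Term σ X) : TEInv t t := by
  cases t with
  | var x => exact Or.inl ⟨x, rfl, rfl⟩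
  | app f ts =>
    exact Or.inr ⟨f, ts, ts, ts, rfl, rfl, .refl _, forall₂_same.2 fun x _ => te_refl x⟩

theorem teInv_of_swapStep {u w : Term σ X} (h : SwapStep u w) : TEInv u w := by
  induction h with
  | root h =>
    cases h with
    | swap f us x y ws =>
      refine Or.inr ⟨f, _, _, us ++ y :: x :: ws, rfl, rfl, ?_, forall₂_same.2 fun z _ => te_refl z⟩
      exact List.Perm.append_left us (List.Perm.swap _ _ _)
  | congr f pre post h _ =>
    refine Or.inr ⟨f, _, _, pre ++ _ :: post, rfl, rfl, .refl _, ?_⟩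
    exact List.rel_append (forall₂_same.2 fun z _ => te_refl z)
      (List.Forall₂.cons (Relation.EqvGen.rel _ _ h) (forall₂_same.2 fun z _ => te_refl z))

theorem teInv_symm {u w : Term σ X} (h : TEInv u w) : TEInv w u := by
  rcases h with ⟨x, rfl, rfl⟩ | ⟨f, us, ws, mid, rfl, rfl, hperm, hf⟩
  · exact Or.inl ⟨x, rfl, rfl⟩
  · -- from us ~ mid, F₂ TE mid ws : want ws ~ mid' ∧ F₂ TE mid' us
    have hf' : Forall₂ TermEquiv ws mid := forall₂_symm_te hf
    obtain ⟨ws', hp', hf''⟩ := forall₂_perm_right hperm.symm hf'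
    exact Or.inr ⟨f, ws, us, ws', rfl, rfl, hp', hf''⟩

theorem teInv_trans {u w v : Term σ X} (h1 : TEInv u w) (h2 : TEInv w v) : TEInv u v := by
  rcases h1 with ⟨x, rfl, rfl⟩ | ⟨f, us, ws, m1, rfl, rfl, hp1, hf1⟩
  · rcases h2 with ⟨y, hxy, rfl⟩ | ⟨g, bs, cs, mid, h, _⟩
    · cases hxy; exact Or.inl ⟨x, rfl, rfl⟩
    · cases h
  · rcases h2 with ⟨y, h, _⟩ | ⟨g, bs, vs, m2, heq, rfl, hp2, hf2⟩
    · cases h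
    · injection heq with h1 h2
      subst h1; subst h2
      obtain ⟨m1', hp1', hf1'⟩ := forall₂_perm_right hp2 hf1
      refine Or.inr ⟨f, us, vs, m1', rfl, rfl, hp1.trans hp1', ?_⟩
      exact forall₂_trans (R := TermEquiv) (S := TermEquiv) (T := TermEquiv)
        (fun h1 h2 => te_trans h1 h2) hf1' hf2

theorem te_inv {u w : Term σ X} (h : TermEquiv u w) : TEInv u w := by
  induction h with
  | rel x y hxy => exact teInv_of_swapStep hxy
  | refl x => exact teInv_refl x
  | symm x y _ ih => exact teInv_symm ih
  | trans x y z _ _ ih1 ih2 => exact teInv_trans ih1 ih2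

theorem te_var {x : X} {w : Term σ X} (h : TermEquiv (Term.var x) w) : w = Term.var x := by
  rcases te_inv h with ⟨y, hy, rfl⟩ | ⟨f, us, ws, mid, h, _⟩
  · cases hy; rfl
  · cases h

theorem te_app_inv {f : σ} {us : List (Term σ X)} {w : Term σ X}
    (h : TermEquiv (Term.app f us) w) :
    ∃ ws mid, w = Term.app f ws ∧ us.Perm mid ∧ Forall₂ TermEquiv mid ws := by
  rcases te_inv h with ⟨y, hy, _⟩ | ⟨f', us', ws, mid, heq, rfl, hp, hf⟩
  · cases hy
  · cases heq; exact ⟨ws, mid, rfl, hp, hf⟩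

theorem uses_of_swapStep {p : σ → Prop} {u w : Term σ X} (h : SwapStep u w) (hu : Uses p u) :
    Uses p w := by
  induction h with
  | root h =>
    cases h with
    | swap f us x y ws =>
      cases hu with
      | app _ _ hp hall =>
        refine Uses.app _ _ hp fun t ht => hall t ?_
        have : (us ++ y :: x :: ws).Perm (us ++ x :: y :: ws) :=
          List.Perm.append_left us (List.Perm.swap _ _ _)
        exact this.mem_iff.1 ht
  | congr f pre post h ih =>
    cases hu with
    | app _ _ hp hall =>
      refine Uses.app _ _ hp fun t ht => ?_
      rcases List.mem_append.1 ht with ht | ht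
      · exact hall t (List.mem_append.2 (Or.inl ht))
      · rcases List.mem_cons.1 ht with rfl | ht
        · exact ih (hall _ (List.mem_append.2 (Or.inr (List.mem_cons_self))))
        · exact hall t (List.mem_append.2 (Or.inr (List.mem_cons_of_mem _ ht)))

theorem uses_of_te {p : σ → Prop} {u w : Term σ X} (h : TermEquiv u w) :
    Uses p u ↔ Uses p w := by
  induction h with
  | rel x y hxy => exact ⟨uses_of_swapStep hxy, uses_of_swapStep (swapStep_symm hxy)⟩
  | refl x => exact Iff.rfl
  | symm x y _ ih => exact ih.symm
  | trans x y z _ _ ih1 ih2 => exact ih1.trans ih2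


section MoreList
variable {A B : Type*}

theorem forall₂_perm_left {R : A → B → Prop} :
    ∀ {a a' : List A} {b : List B}, a.Perm a' → Forall₂ R a b →
      ∃ b', b.Perm b' ∧ Forall₂ R a' b' := by
  intro a a' b hp
  induction hp generalizing b with
  | nil => exact fun h => ⟨b, .refl b, by cases h; exact .nil⟩
  | cons x h ih =>
    intro hf
    cases hf with
    | cons hR hf =>
      obtain ⟨b', hp', hf'⟩ := ih hf
      exact ⟨_ :: b', hp'.cons _, .cons hR hf'⟩
  | swap x y l =>
    intro hf
    cases hf with
    | cons h1 hf1 =>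
      cases hf1 with
      | cons h2 hf2 => exact ⟨_ :: _ :: _, List.Perm.swap _ _ _, .cons h2 (.cons h1 hf2)⟩
  | trans h1 h2 ih1 ih2 =>
    intro hf
    obtain ⟨b1, hp1, hf1⟩ := ih1 hf
    obtain ⟨b2, hp2, hf2⟩ := ih2 hf1
    exact ⟨b2, hp1.trans hp2, hf2⟩

theorem forall₂_append_inv_left {R : A → B → Prop} :
    ∀ {a rest : List A} {c : List B}, Forall₂ R (a ++ rest) c →
      ∃ c₁ c₂, c = c₁ ++ c₂ ∧ Forall₂ R a c₁ ∧ Forall₂ R rest c₂ := by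
  intro a
  induction a with
  | nil => exact fun h => ⟨[], _, rfl, .nil, h⟩
  | cons x a ih =>
    intro rest c h
    cases h with
    | cons hR h =>
      obtain ⟨c₁, c₂, rfl, h1, h2⟩ := ih h
      exact ⟨_ :: c₁, c₂, rfl, .cons hR h1, h2⟩

theorem forall₂_flatten_split {R : A → B → Prop} :
    ∀ {L : List (List A)} {c : List B}, Forall₂ R L.flatten c →
      ∃ C : List (List B), c = C.flatten ∧ Forall₂ (Forall₂ R) L C := by
  intro L
  induction L with
  | nil => intro c h; rw [flatten_nil] at h; cases h; exact ⟨[], rfl, .nil⟩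
  | cons a L ih =>
    intro c h
    rw [flatten_cons] at h
    obtain ⟨c₁, c₂, rfl, h1, h2⟩ := forall₂_append_inv_left h
    obtain ⟨C, rfl, hC⟩ := ih h2
    exact ⟨c₁ :: C, rfl, .cons h1 hC⟩

theorem forall₂_singleton_left {R : A → B → Prop} {s : A} :
    ∀ {c : List B}, Forall₂ R [s] c → ∃ w, c = [w] ∧ R s w := by
  intro c h
  cases h with
  | cons hR h => cases h; exact ⟨_, rfl, hR⟩

theorem exists_rebuild_snd {R : B → B → Prop} :
    ∀ {l : List (A × B)} {C : List B}, Forall₂ R (l.map Prod.snd) C →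
      ∃ l' : List (A × B), l'.map Prod.fst = l.map Prod.fst ∧ l'.map Prod.snd = C ∧
        Forall₂ (fun p p' => p.1 = p'.1 ∧ R p.2 p'.2) l l' := by
  intro l
  induction l with
  | nil => intro C h; cases h; exact ⟨[], rfl, rfl, .nil⟩
  | cons p l ih =>
    intro C h
    cases h with
    | @cons _ b _ _ hR h =>
      obtain ⟨l', h1, h2, h3⟩ := ih h
      exact ⟨(p.1, b) :: l', by simp [h1], by simp [h2], .cons ⟨rfl, hR⟩ h3⟩

theorem exists_rebuild_fst {R : A → A → Prop} :
    ∀ {l : List (A × B)} {F : List A}, Forall₂ R (l.map Prod.fst) F →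
      ∃ l' : List (A × B), l'.map Prod.fst = F ∧ l'.map Prod.snd = l.map Prod.snd ∧
        Forall₂ (fun p p' => R p.1 p'.1 ∧ p.2 = p'.2) l l' := by
  intro l
  induction l with
  | nil => intro F h; cases h; exact ⟨[], rfl, rfl, .nil⟩
  | cons p l ih =>
    intro F h
    cases h with
    | @cons _ b _ _ hR h =>
      obtain ⟨l', h1, h2, h3⟩ := ih h
      exact ⟨(b, p.2) :: l', by simp [h1], by simp [h2], .cons ⟨hR, rfl⟩ h3⟩

end MoreList

/-! ### The order `GT` (an MPO-style order on marked terms) -/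

variable {β X : Type}

/-- underlying symbol of a possibly-marked symbol -/
def sym : β ⊕ β → β := Sum.elim id id

@[simp] theorem sym_inl (f : β) : sym (Sum.inl f : β ⊕ β) = f := rfl
@[simp] theorem sym_inr (f : β) : sym (Sum.inr f : β ⊕ β) = f := rfl

variable (lt : β → β → Prop)

inductive GT : Term (β ⊕ β) X → Term (β ⊕ β) X → Prop
  | sub (r : β ⊕ β) (us : List (Term (β ⊕ β) X)) (u t : Term (β ⊕ β) X)
      (hu : u ∈ us) (h : ¬ TermEquiv u t → GT u t) : GT (Term.app r us) t
  | prec (r : β ⊕ β) (us : List (Term (β ⊕ β) X)) (g : β) (ts : List (Term (β ⊕ β) X))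
      (hg : lt g (sym r)) (h : ∀ t ∈ ts, GT (Term.app r us) t) :
      GT (Term.app r us) (Term.app (Sum.inl g) ts)
  | mul (r : β ⊕ β) (us ts : List (Term (β ⊕ β) X))
      (l : List (Term (β ⊕ β) X × List (Term (β ⊕ β) X)))
      (p₀ : Term (β ⊕ β) X × List (Term (β ⊕ β) X))
      (hus : us.Perm (l.map Prod.fst)) (hts : ts.Perm (l.map Prod.snd).flatten)
      (hl : ∀ p ∈ l, ∀ t ∈ p.2, ¬ (p.2 = [t] ∧ TermEquiv p.1 t) → GT p.1 t)
      (hp₀ : p₀ ∈ l) (hstrict : ∀ t ∈ p₀.2, GT p₀.1 t) :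
      GT (Term.app r us) (Term.app (Sum.inl (sym r)) ts)

variable {lt}

/-- `GT` is invariant under `≃` on the right. -/
theorem gt_te_right : ∀ {u t : Term (β ⊕ β) X}, GT lt u t →
    ∀ t', TermEquiv t t' → GT lt u t' := by
  intro u t hgt
  induction hgt with
  | sub r us u t hu h ih =>
    intro t' htt'
    refine GT.sub r us u t' hu fun hne => ?_
    by_cases hc : TermEquiv u t
    · exact absurd (te_trans hc htt') hne
    · exact ih hc _ htt'
  | prec r us g ts hg h ih =>
    intro t' htt'
    obtain ⟨ws, mid, rfl, hperm, hf⟩ := te_app_inv htt'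
    refine GT.prec r us g ws hg fun w hw => ?_
    obtain ⟨m, hm, hmw⟩ := forall₂_mem_right hf hw
    exact ih m (hperm.mem_iff.2 hm) _ hmw
  | mul r us ts l p₀ hus hts hl hp₀ hstrict ihl ihstrict =>
    intro t' htt'
    obtain ⟨ws, mid, rfl, hperm, hf⟩ := te_app_inv htt'
    -- align `ws` with the block structure of `l`
    obtain ⟨ws', hwp, hf'⟩ := forall₂_perm_left (hperm.symm.trans hts) hf
    obtain ⟨C, rfl, hC⟩ := forall₂_flatten_split hf'
    obtain ⟨l', hfst, hsnd, hrel⟩ := exists_rebuild_snd hC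
    obtain ⟨p₀', hp₀', hrel₀⟩ := forall₂_mem_left hrel hp₀
    refine GT.mul r us ws l' p₀' (by rw [hfst]; exact hus) (by rw [hsnd]; exact hwp) ?_ hp₀' ?_
    · intro p' hp' w hw hne
      obtain ⟨p, hp, hpeq, hpf⟩ := forall₂_mem_right hrel hp'
      obtain ⟨s, hs, hsw⟩ := forall₂_mem_right hpf hw
      by_cases horig : p.2 = [s] ∧ TermEquiv p.1 s
      · exfalso
        apply hne
        have hsing : Forall₂ TermEquiv [s] p'.2 := horig.1 ▸ hpf
        obtain ⟨w', hw', hsw'⟩ := forall₂_singleton_left hsing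
        rw [hw'] at hw
        rcases List.mem_singleton.1 hw with rfl
        exact ⟨hw', hpeq ▸ (te_trans horig.2 hsw')⟩
      · exact hpeq ▸ ihl p hp s hs horig w hsw
    · intro w hw
      obtain ⟨s, hs, hsw⟩ := forall₂_mem_right hrel₀.2 hw
      exact hrel₀.1 ▸ ihstrict s hs _ hsw

/-- `GT` is invariant under `≃` on the left. -/
theorem gt_te_left : ∀ {u t : Term (β ⊕ β) X}, GT lt u t →
    ∀ u', TermEquiv u u' → GT lt u' t := by
  intro u t hgt
  induction hgt with
  | sub r us u t hu h ih =>
    intro u' huu'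
    obtain ⟨us', mid, rfl, hperm, hf⟩ := te_app_inv huu'
    obtain ⟨w, hw, hww⟩ := forall₂_mem_left hf (hperm.mem_iff.1 hu)
    refine GT.sub r us' w t hw fun hne => ?_
    by_cases hc : TermEquiv u t
    · exact absurd (te_trans (te_symm hww) hc) hne
    · exact ih hc _ hww
  | prec r us g ts hg h ih =>
    intro u' huu'
    obtain ⟨us', mid, rfl, hperm, hf⟩ := te_app_inv huu'
    exact GT.prec r us' g ts hg fun t' ht' => ih t' ht' _ huu'
  | mul r us ts l p₀ hus hts hl hp₀ hstrict ihl ihstrict =>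
    intro u' huu'
    obtain ⟨us', mid, rfl, hperm, hf⟩ := te_app_inv huu'
    obtain ⟨fs', hfp, hf'⟩ := forall₂_perm_left (hperm.symm.trans hus) hf
    obtain ⟨l', hfst, hsnd, hrel⟩ := exists_rebuild_fst hf'
    obtain ⟨p₀', hp₀', hrel₀⟩ := forall₂_mem_left hrel hp₀
    refine GT.mul r us' ts l' p₀' (hfst ▸ hfp) (by rw [hsnd]; exact hts) ?_ hp₀' ?_
    · intro p' hp' t' ht' hne
      obtain ⟨p, hp, hpf, hpeq⟩ := forall₂_mem_right hrel hp'
      by_cases horig : p.2 = [t'] ∧ TermEquiv p.1 t'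
      · exact absurd ⟨hpeq ▸ horig.1, te_trans (te_symm hpf) horig.2⟩ hne
      · exact ihl p hp t' (by rw [hpeq]; exact ht') horig _ hpf
    · intro t' ht'
      exact ihstrict t' (by rw [hrel₀.2]; exact ht') _ hrel₀.1

end Aux


namespace Aux

open List

variable {β X : Type} {lt : β → β → Prop}

local notation "T" => Term (β ⊕ β) X
local notation "SF" => StarFreeTerm (σ := β) (X := X)

theorem sf_app_inv {r : β ⊕ β} {ts : List T} (h : SF (Term.app r ts)) :
    Unstarred r ∧ ∀ t ∈ ts, SF t := by
  cases h with
  | app _ _ hp hall => exact ⟨hp, hall⟩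

theorem not_sf_inr {f : β} {ts : List T} (h : SF (Term.app (Sum.inr f) ts)) : False := by
  obtain ⟨⟨g, hg⟩, -⟩ := sf_app_inv h
  cases hg

theorem sf_of_te {u w : T} (h : TermEquiv u w) (hu : SF u) : SF w :=
  (uses_of_te h).1 hu

/-! ### unmark -/

def unmark : T → T
  | .var x => .var x
  | .app r ts => .app (Sum.inl (sym r)) (ts.attach.map fun ⟨t, _⟩ => unmark t)
decreasing_by
  have := List.sizeOf_lt_of_mem ‹_ ∈ ts›
  simp only [Term.app.sizeOf_spec]
  omega

theorem unmark_app (r : β ⊕ β) (ts : List T) :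
    unmark (Term.app r ts) = Term.app (Sum.inl (sym r)) (ts.map unmark) := by
  rw [unmark]
  congr 1
  simp [List.attach_map_val]

theorem unmark_sf : ∀ {t : T}, SF t → unmark t = t := by
  intro t h
  induction h with
  | var x => rw [unmark]
  | app f ts hp hall ih =>
    obtain ⟨g, rfl⟩ := hp
    rw [unmark_app]
    simp only [sym_inl]
    congr 1
    rw [List.map_congr_left fun t ht => ih t ht]
    exact List.map_id _

/-- A `Star` step out of a star-free term is a `put`, and unmarking undoes it. -/
theorem sf_step {u v : T} (h : Rewrite (StarRoot lt) u v) (hu : SF u) :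
    unmark v = u ∧ ¬ SF v := by
  induction h with
  | root h =>
    cases h with
    | put f ts =>
      obtain ⟨-, hall⟩ := sf_app_inv hu
      constructor
      · rw [unmark_app, sym_inr]
        congr 1
        rw [List.map_congr_left fun t ht => unmark_sf (hall t ht)]
        exact List.map_id _
      · exact not_sf_inr
    | select f xs y zs => exact absurd hu not_sf_inr
    | copy f g k ts _ => exact absurd hu not_sf_inr
    | down f g k xs ys zs => exact absurd hu not_sf_inr
  | congr f pre post hst ih =>
    obtain ⟨⟨g, rfl⟩, hall⟩ := sf_app_inv hu
    have hs : SF _ := hall _ (List.mem_append.2 (Or.inr (List.mem_cons_self)))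
    obtain ⟨hun, hnsf⟩ := ih hs
    constructor
    · rw [unmark_app, sym_inl]
      congr 1
      rw [List.map_append, List.map_cons, hun]
      congr 1
      · rw [List.map_congr_left fun t ht => unmark_sf (hall t (List.mem_append.2 (Or.inl ht)))]
        exact List.map_id _
      · congr 1
        rw [List.map_congr_left fun t ht =>
          unmark_sf (hall t (List.mem_append.2 (Or.inr (List.mem_cons_of_mem _ ht))))]
        exact List.map_id _
    · intro hv
      obtain ⟨-, hall'⟩ := sf_app_inv hv
      exact hnsf (hall' _ (List.mem_append.2 (Or.inr (List.mem_cons_self))))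

/-- unmarking preserves the order (left side). -/
theorem gt_unmark : ∀ {v w : T}, GT lt v w → SF w → GT lt (unmark v) w := by
  intro v w h
  induction h with
  | sub r us u t hu h ih =>
    intro hw
    rw [unmark_app]
    refine GT.sub _ _ (unmark u) t (List.mem_map.2 ⟨u, hu, rfl⟩) fun hne => ?_
    by_cases hc : TermEquiv u t
    · have hsfu : SF u := (uses_of_te hc).2 hw
      rw [unmark_sf hsfu] at hne ⊢
      exact absurd hc hne
    · exact ih hc hw
  | prec r us g ts hg h ih =>
    intro hw
    obtain ⟨-, hall⟩ := sf_app_inv hw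
    rw [unmark_app]
    exact GT.prec _ _ g ts (by simpa using hg) fun t ht => by
      rw [← unmark_app]; exact ih t ht (hall t ht)
  | mul r us ts l p₀ hus hts hl hp₀ hstrict ihl ihstrict =>
    intro hw
    obtain ⟨-, hall⟩ := sf_app_inv hw
    have hsf_elt : ∀ p ∈ l, ∀ t ∈ p.2, SF t := by
      intro p hp t ht
      refine hall t (hts.mem_iff.2 ?_)
      exact List.mem_flatten.2 ⟨p.2, List.mem_map.2 ⟨p, hp, rfl⟩, ht⟩
    rw [unmark_app]
    refine GT.mul _ _ ts (l.map fun p => (unmark p.1, p.2)) (unmark p₀.1, p₀.2)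
      ?_ ?_ ?_ (List.mem_map.2 ⟨p₀, hp₀, rfl⟩) ?_
    · have : (l.map fun p => (unmark p.1, p.2)).map Prod.fst = (l.map Prod.fst).map unmark := by
        simp
      rw [this]
      exact hus.map unmark
    · have : (l.map fun p => (unmark p.1, p.2)).map Prod.snd = l.map Prod.snd := by simp
      rw [this]
      exact hts
    · intro p' hp' t ht hne
      obtain ⟨p, hp, rfl⟩ := List.mem_map.1 hp'
      simp only at ht hne ⊢
      by_cases horig : p.2 = [t] ∧ TermEquiv p.1 t
      · have hsfp : SF p.1 := (uses_of_te horig.2).2 (hsf_elt p hp t ht)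
        rw [unmark_sf hsfp] at hne
        exact absurd horig hne
      · exact ihl p hp t ht horig (hsf_elt p hp t ht)
    · intro t ht
      simp only at ht ⊢
      exact ihstrict t ht (hsf_elt p₀ hp₀ t ht)

/-! ### helpers for surgery on multiset-extension witnesses -/

theorem flatten_sing {A : Type*} : ∀ (L : List A), (L.map fun x => [x]).flatten = L := by
  intro L
  induction L with
  | nil => rfl
  | cons x L ih => simp [ih]

theorem flatten_singletons {A : Type*} (L : List A) :
    ((L.map fun x => (x, [x])).map Prod.snd).flatten = L := by
  rw [List.map_map]
  simp only [Function.comp_def]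
  exact flatten_sing L

theorem map_fst_singletons {A : Type*} (L : List A) :
    ((L.map fun x => (x, [x])).map Prod.fst) = L := by
  simp [Function.comp_def]

theorem perm_rot {A : Type*} (a b c : List A) : (a ++ b ++ c).Perm (b ++ (a ++ c)) := by
  calc a ++ b ++ c ~ (b ++ a) ++ c := (List.perm_append_comm).append_right c
    _ = b ++ (a ++ c) := by rw [List.append_assoc]

theorem gt_resym_aux : ∀ {v w : T}, GT lt v w → ∀ {r r' : β ⊕ β} {us : List T},
    v = Term.app r us → sym r' = sym r → GT lt (Term.app r' us) w := by
  intro v w h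
  induction h with
  | sub r0 us0 u t hu hh ih =>
    intro r r' us heq hsym
    injection heq with h1 h2
    subst h1; subst h2
    exact GT.sub r' _ u t hu hh
  | prec r0 us0 g ts hg hh ih =>
    intro r r' us heq hsym
    injection heq with h1 h2
    subst h1; subst h2
    exact GT.prec r' _ g ts (hsym ▸ hg) fun t ht => ih t ht rfl hsym
  | mul r0 us0 ts l p₀ hus hts hl hp₀ hstrict ihl ihstrict =>
    intro r r' us heq hsym
    injection heq with h1 h2
    subst h1; subst h2
    have := GT.mul (lt := lt) r' _ ts l p₀ hus hts hl hp₀ hstrict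
    rwa [hsym] at this

theorem gt_resym {r r' : β ⊕ β} (hsym : sym r' = sym r) {us : List T} {w : T}
    (h : GT lt (Term.app r us) w) : GT lt (Term.app r' us) w :=
  gt_resym_aux h rfl hsym

theorem copy_gt (htr : Transitive lt) {f g : β} {k : ℕ} {ts : List T} (hgf : lt g f) :
    ∀ {v w : T}, GT lt v w → SF w →
      v = Term.app (Sum.inl g) (List.replicate k (Term.app (Sum.inr f) ts)) →
      GT lt (Term.app (Sum.inr f) ts) w := by
  intro v w h
  induction h with
  | sub r us u t hu hh ih =>
    intro hw heq
    injection heq with h1 h2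
    subst h1; subst h2
    have hus : u = Term.app (Sum.inr f) ts := List.eq_of_mem_replicate hu
    subst hus
    by_cases hc : TermEquiv (Term.app (Sum.inr f) ts) t
    · exact absurd ((uses_of_te hc).2 hw) not_sf_inr
    · exact hh hc
  | prec r us g' ts' hg hh ih =>
    intro hw heq
    injection heq with h1 h2
    subst h1; subst h2
    obtain ⟨-, hall⟩ := sf_app_inv hw
    refine GT.prec (Sum.inr f) ts g' ts' ?_ fun t ht => ih t ht (hall t ht) rfl
    simp only [sym_inr]
    simp only [sym_inl] at hg
    exact htr hg hgf
  | mul r us ts' l p₀ hus hts hl hp₀ hstrict ihl ihstrict =>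
    intro hw heq
    injection heq with h1 h2
    subst h1; subst h2
    obtain ⟨-, hall⟩ := sf_app_inv hw
    have hgt : ∀ t ∈ ts', GT lt (Term.app (Sum.inr f) ts) t := by
      intro t htm
      obtain ⟨c, hc, htc⟩ := List.mem_flatten.1 (hts.mem_iff.1 htm)
      obtain ⟨p, hp, rfl⟩ := List.mem_map.1 hc
      have hp1 : p.1 = Term.app (Sum.inr f) ts := by
        have : p.1 ∈ List.replicate k (Term.app (Sum.inr f) ts) :=
          hus.mem_iff.2 (List.mem_map.2 ⟨p, hp, rfl⟩)
        exact List.eq_of_mem_replicate this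
      by_cases hc2 : p.2 = [t] ∧ TermEquiv p.1 t
      · exact absurd ((uses_of_te (hp1 ▸ hc2.2)).2 (hall t htm)) not_sf_inr
      · exact hp1 ▸ hl p hp t htc hc2
    refine GT.prec (Sum.inr f) ts g ts' (by simpa using hgf) hgt

theorem extract_repl {c' : T} :
    ∀ (k : ℕ) {N : List (T × List T)} {L : List T},
      (List.replicate k c' ++ L).Perm (N.map Prod.fst) →
      ∃ (N' : List (T × List T)) (coll : List T),
        L.Perm (N'.map Prod.fst) ∧
        ((N.map Prod.snd).flatten).Perm ((N'.map Prod.snd).flatten ++ coll) ∧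
        (∀ p ∈ N', p ∈ N) ∧
        (∀ t ∈ coll, ∃ p, p ∈ N ∧ p.1 = c' ∧ t ∈ p.2) := by
  intro k
  induction k with
  | zero =>
    intro N L h
    exact ⟨N, [], by simpa using h, by simp, fun p hp => hp, by simp⟩
  | succ k ih =>
    intro N L h
    have hc : c' ∈ N.map Prod.fst := by
      refine h.mem_iff.1 ?_
      simp [List.mem_replicate]
    obtain ⟨p, N₀, hpc, hperm⟩ := extract_fst hc
    have hfst : (N.map Prod.fst).Perm (p.1 :: N₀.map Prod.fst) := hperm.map Prod.fst
    have h2 : (List.replicate k c' ++ L).Perm (N₀.map Prod.fst) := by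
      have hstep : (c' :: (List.replicate k c' ++ L)).Perm (c' :: N₀.map Prod.fst) := by
        calc c' :: (List.replicate k c' ++ L) = List.replicate (k+1) c' ++ L := by
              simp [List.replicate_succ]
          _ ~ N.map Prod.fst := h
          _ ~ p.1 :: N₀.map Prod.fst := hfst
          _ = c' :: N₀.map Prod.fst := by rw [hpc]
      exact hstep.cons_inv
    obtain ⟨N', coll, hL, hflat, hmem, hcoll⟩ := ih h2
    refine ⟨N', p.2 ++ coll, hL, ?_,
      fun q hq => hperm.mem_iff.2 (List.mem_cons_of_mem _ (hmem q hq)), ?_⟩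
    · calc (N.map Prod.snd).flatten
          ~ ((p :: N₀).map Prod.snd).flatten := (hperm.map Prod.snd).flatten
        _ = p.2 ++ (N₀.map Prod.snd).flatten := by simp
        _ ~ p.2 ++ ((N'.map Prod.snd).flatten ++ coll) := List.Perm.append_left p.2 hflat
        _ = (p.2 ++ (N'.map Prod.snd).flatten) ++ coll := by rw [List.append_assoc]
        _ ~ ((N'.map Prod.snd).flatten ++ p.2) ++ coll :=
            (List.perm_append_comm).append_right coll
        _ = (N'.map Prod.snd).flatten ++ (p.2 ++ coll) := by rw [List.append_assoc]
    · intro t ht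
      rcases List.mem_append.1 ht with ht | ht
      · exact ⟨p, hperm.mem_iff.2 (List.mem_cons_self), hpc, ht⟩
      · obtain ⟨q, hq, hq1, hq2⟩ := hcoll t ht
        exact ⟨q, hperm.mem_iff.2 (List.mem_cons_of_mem _ hq), hq1, hq2⟩

theorem down_gt {f g : β} {xs ys zs : List T} {k : ℕ} :
    ∀ {v w : T}, GT lt v w → SF w →
      v = Term.app (Sum.inl f) (xs ++ List.replicate k (Term.app (Sum.inr g) ys) ++ zs) →
      GT lt (Term.app (Sum.inr f) (xs ++ Term.app (Sum.inl g) ys :: zs)) w := by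
  intro v w h
  induction h with
  | sub r us u t hu hh ih =>
    intro hw heq
    injection heq with h1 h2
    subst h1; subst h2
    rcases List.mem_append.1 hu with hu' | hu'
    · rcases List.mem_append.1 hu' with hu'' | hu''
      · exact GT.sub _ _ u t (List.mem_append.2 (Or.inl hu'')) hh
      · have huc : u = Term.app (Sum.inr g) ys := List.eq_of_mem_replicate hu''
        subst huc
        refine GT.sub _ _ (Term.app (Sum.inl g) ys) t
          (List.mem_append.2 (Or.inr (List.mem_cons_self))) fun hne => ?_
        by_cases hc : TermEquiv (Term.app (Sum.inr g) ys) t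
        · exact absurd ((uses_of_te hc).2 hw) not_sf_inr
        · exact gt_resym (r := Sum.inr g) (r' := Sum.inl g) rfl (hh hc)
    · exact GT.sub _ _ u t (List.mem_append.2 (Or.inr (List.mem_cons_of_mem _ hu'))) hh
  | prec r us g' ts' hg hh ih =>
    intro hw heq
    injection heq with h1 h2
    subst h1; subst h2
    obtain ⟨-, hall⟩ := sf_app_inv hw
    refine GT.prec _ _ g' ts' (by simpa using hg) fun t ht => ih t ht (hall t ht) rfl
  | mul r us ts' l p₀ hus hts hl hp₀ hstrict ihl ihstrict =>
    intro hw heq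
    injection heq with h1 h2
    subst h1; subst h2
    obtain ⟨-, hall⟩ := sf_app_inv hw
    have hus' : (List.replicate k (Term.app (Sum.inr g) ys) ++ (xs ++ zs)).Perm
        (l.map Prod.fst) := (perm_rot xs _ zs).symm.trans hus
    obtain ⟨N', coll, hL, hflat, hmem, hcoll⟩ := extract_repl k hus'
    have hsf_flat : ∀ t ∈ (l.map Prod.snd).flatten, SF t := fun t ht =>
      hall t (hts.mem_iff.2 ht)
    have hcoll_gt : ∀ t ∈ coll, GT lt (Term.app (Sum.inl g) ys) t := by
      intro t ht
      obtain ⟨p, hp, hp1, hp2⟩ := hcoll t ht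
      have htf : t ∈ (l.map Prod.snd).flatten :=
        List.mem_flatten.2 ⟨p.2, List.mem_map.2 ⟨p, hp, rfl⟩, hp2⟩
      by_cases hc2 : p.2 = [t] ∧ TermEquiv p.1 t
      · exact absurd ((uses_of_te (hp1 ▸ hc2.2)).2 (hsf_flat t htf)) not_sf_inr
      · have hgt := hl p hp t hp2 hc2
        rw [hp1] at hgt
        exact gt_resym (r := Sum.inr g) (r' := Sum.inl g) rfl hgt
    refine GT.mul (Sum.inr f) _ ts' ((Term.app (Sum.inl g) ys, coll) :: N')
      (Term.app (Sum.inl g) ys, coll) ?_ ?_ ?_ (List.mem_cons_self) hcoll_gt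
    · calc xs ++ Term.app (Sum.inl g) ys :: zs
          ~ Term.app (Sum.inl g) ys :: (xs ++ zs) := List.perm_middle
        _ ~ Term.app (Sum.inl g) ys :: (N'.map Prod.fst) := hL.cons _
    · calc ts' ~ (l.map Prod.snd).flatten := hts
        _ ~ (N'.map Prod.snd).flatten ++ coll := hflat
        _ ~ coll ++ (N'.map Prod.snd).flatten := List.perm_append_comm
    · intro p hp t ht hne
      rcases List.mem_cons.1 hp with rfl | hp
      · exact hcoll_gt t ht
      · exact hl p (hmem p hp) t ht hne

theorem congr_gt {f₀ : β ⊕ β} {pre post : List T} {a b : T}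
    (IH : ∀ w : T, SF w →
      (GT lt b w → GT lt a w) ∧ (TermEquiv b w → GT lt a w ∨ TermEquiv a w)) :
    ∀ {v w : T}, GT lt v w → SF w → v = Term.app f₀ (pre ++ b :: post) →
      GT lt (Term.app f₀ (pre ++ a :: post)) w := by
  intro v w h
  induction h with
  | sub r us u t hu hh ih =>
    intro hw heq
    injection heq with h1 h2
    subst h1; subst h2
    rcases List.mem_append.1 hu with hu' | hu'
    · exact GT.sub _ _ u t (List.mem_append.2 (Or.inl hu')) hh
    · rcases List.mem_cons.1 hu' with rfl | hu'
      · refine GT.sub _ _ a t (List.mem_append.2 (Or.inr (List.mem_cons_self)))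
          fun hne => ?_
        by_cases hbt : TermEquiv u t
        · rcases (IH t hw).2 hbt with hgt | hte
          · exact hgt
          · exact absurd hte hne
        · exact (IH t hw).1 (hh hbt)
      · exact GT.sub _ _ u t (List.mem_append.2 (Or.inr (List.mem_cons_of_mem _ hu'))) hh
  | prec r us g' ts' hg hh ih =>
    intro hw heq
    injection heq with h1 h2
    subst h1; subst h2
    obtain ⟨-, hall⟩ := sf_app_inv hw
    exact GT.prec _ _ g' ts' hg fun t ht => ih t ht (hall t ht) rfl
  | mul r us ts' l p₀ hus hts hl hp₀ hstrict ihl ihstrict =>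
    intro hw heq
    injection heq with h1 h2
    subst h1; subst h2
    obtain ⟨-, hall⟩ := sf_app_inv hw
    have hsf_flat : ∀ t ∈ (l.map Prod.snd).flatten, SF t := fun t ht =>
      hall t (hts.mem_iff.2 ht)
    have hbfst : b ∈ l.map Prod.fst :=
      hus.mem_iff.1 (List.mem_append.2 (Or.inr (List.mem_cons_self)))
    obtain ⟨p, N₀, hp1, hperm⟩ := extract_fst hbfst
    have hrest : (pre ++ post).Perm (N₀.map Prod.fst) := by
      have hstep : (b :: (pre ++ post)).Perm (b :: N₀.map Prod.fst) := by
        calc b :: (pre ++ post) ~ pre ++ b :: post := List.perm_middle.symm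
          _ ~ l.map Prod.fst := hus
          _ ~ p.1 :: N₀.map Prod.fst := hperm.map Prod.fst
          _ = b :: N₀.map Prod.fst := by rw [hp1]
      exact hstep.cons_inv
    have hpl : p ∈ l := hperm.mem_iff.2 (List.mem_cons_self)
    have hsnd_sf : ∀ t ∈ p.2, SF t := fun t ht =>
      hsf_flat t (List.mem_flatten.2 ⟨p.2, List.mem_map.2 ⟨p, hpl, rfl⟩, ht⟩)
    have hhead : ∀ t ∈ p.2, ¬ (p.2 = [t] ∧ TermEquiv a t) → GT lt a t := by
      intro t ht hne
      by_cases horig : p.2 = [t] ∧ TermEquiv p.1 t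
      · rcases (IH t (hsnd_sf t ht)).2 (hp1 ▸ horig.2) with hgt | hte
        · exact hgt
        · exact absurd ⟨horig.1, hte⟩ hne
      · exact (IH t (hsnd_sf t ht)).1 (hp1 ▸ hl p hpl t ht horig)
    have hflat : ((l.map Prod.snd).flatten).Perm (p.2 ++ (N₀.map Prod.snd).flatten) := by
      calc (l.map Prod.snd).flatten ~ ((p :: N₀).map Prod.snd).flatten :=
            (hperm.map Prod.snd).flatten
        _ = p.2 ++ (N₀.map Prod.snd).flatten := by simp
    by_cases hp₀p : p₀ = p
    · refine GT.mul _ _ ts' ((a, p.2) :: N₀) (a, p.2) ?_ ?_ ?_ (List.mem_cons_self) ?_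
      · exact List.perm_middle.trans (hrest.cons a)
      · exact hts.trans hflat
      · intro q hq t ht hne
        rcases List.mem_cons.1 hq with rfl | hq
        · exact hhead t ht hne
        · exact hl q (hperm.mem_iff.2 (List.mem_cons_of_mem _ hq)) t ht hne
      · intro t ht
        exact (IH t (hsnd_sf t ht)).1 (hp1 ▸ (hp₀p ▸ hstrict) t ht)
    · have hp₀N : p₀ ∈ N₀ := by
        rcases List.mem_cons.1 (hperm.mem_iff.1 hp₀) with h' | h'
        · exact absurd h' hp₀p
        · exact h'
      refine GT.mul _ _ ts' ((a, p.2) :: N₀) p₀ ?_ ?_ ?_ (List.mem_cons_of_mem _ hp₀N) hstrict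
      · exact List.perm_middle.trans (hrest.cons a)
      · exact hts.trans hflat
      · intro q hq t ht hne
        rcases List.mem_cons.1 hq with rfl | hq
        · exact hhead t ht hne
        · exact hl q (hperm.mem_iff.2 (List.mem_cons_of_mem _ hq)) t ht hne

/-- Preservation: a `Star` step weakly decreases `GT`-bounds. -/
theorem preserve (htr : Transitive lt) :
    ∀ {u v : T}, Rewrite (StarRoot lt) u v →
      ∀ w : T, SF w →
        (GT lt v w → GT lt u w) ∧ (TermEquiv v w → GT lt u w ∨ TermEquiv u w) := by
  intro u v h
  induction h with
  | @root s0 t0 hr =>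
    cases hr with
    | put f ts =>
      intro w hw
      refine ⟨fun h => gt_resym (r := Sum.inr f) (r' := Sum.inl f) rfl h, fun hTE => ?_⟩
      exact absurd ((uses_of_te hTE).2 hw) not_sf_inr
    | select f xs y zs =>
      intro w hw
      constructor
      · intro h
        exact GT.sub _ _ t0 w (List.mem_append.2 (Or.inr (List.mem_cons_self))) fun _ => h
      · intro hTE
        exact Or.inl (GT.sub _ _ t0 w (List.mem_append.2 (Or.inr (List.mem_cons_self)))
          fun hne => absurd hTE hne)
    | copy f g k ts hgf =>
      intro w hw
      refine ⟨fun h => copy_gt htr hgf h hw rfl, fun hTE => ?_⟩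
      cases k with
      | zero =>
        refine Or.inl (gt_te_right ?_ _ hTE)
        exact GT.prec (Sum.inr f) ts g _ (by simpa using hgf) (by intro t ht; cases ht)
      | succ k =>
        exfalso
        have hv : SF (Term.app (Sum.inl g)
            (List.replicate (k+1) (Term.app (Sum.inr f) ts))) := (uses_of_te hTE).2 hw
        obtain ⟨-, hall⟩ := sf_app_inv hv
        exact not_sf_inr (hall _ (List.mem_replicate.2 ⟨Nat.succ_ne_zero k, rfl⟩))
    | down f g k xs ys zs =>
      intro w hw
      refine ⟨fun h => down_gt h hw rfl, fun hTE => ?_⟩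
      cases k with
      | zero =>
        refine Or.inl (gt_te_right ?_ _ hTE)
        -- GT (f⋆(xs ++ g(ys) :: zs)) (f(xs ++ [] ++ zs))
        refine GT.mul (Sum.inr f) _ (xs ++ List.replicate 0 (Term.app (Sum.inr g) ys) ++ zs)
          ((xs.map fun x => (x, [x])) ++ (Term.app (Sum.inl g) ys, ([] : List T)) ::
            (zs.map fun x => (x, [x])))
          (Term.app (Sum.inl g) ys, ([] : List T)) ?_ ?_ ?_
          (List.mem_append.2 (Or.inr (List.mem_cons_self))) (by intro t ht; cases ht)
        · rw [List.map_append, List.map_cons]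
          simp only [map_fst_singletons]
          exact List.Perm.refl _
        · rw [List.map_append, List.map_cons]
          rw [List.flatten_append, List.flatten_cons]
          rw [flatten_singletons, flatten_singletons]
          simp
        · intro q hq t ht hne
          rcases List.mem_append.1 hq with hq | hq
          · obtain ⟨x, hx, rfl⟩ := List.mem_map.1 hq
            rcases List.mem_singleton.1 ht with rfl
            exact absurd ⟨rfl, te_refl _⟩ hne
          · rcases List.mem_cons.1 hq with rfl | hq
            · cases ht
            · obtain ⟨x, hx, rfl⟩ := List.mem_map.1 hq
              rcases List.mem_singleton.1 ht with rfl
              exact absurd ⟨rfl, te_refl _⟩ hne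
      | succ k =>
        exfalso
        have hv : SF (Term.app (Sum.inl f)
            (xs ++ List.replicate (k+1) (Term.app (Sum.inr g) ys) ++ zs)) :=
          (uses_of_te hTE).2 hw
        obtain ⟨-, hall⟩ := sf_app_inv hv
        have hm : Term.app (Sum.inr g) ys ∈
            xs ++ List.replicate (k+1) (Term.app (Sum.inr g) ys) ++ zs :=
          List.mem_append.2 (Or.inl (List.mem_append.2 (Or.inr
            (List.mem_replicate.2 ⟨Nat.succ_ne_zero k, rfl⟩))))
        exact not_sf_inr (hall _ hm)
  | @congr a b f₀ pre post hsub ih =>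
    intro w hw
    constructor
    · exact fun h => congr_gt ih h hw rfl
    · intro hTE
      have hsfv : SF (Term.app f₀ (pre ++ b :: post)) := (uses_of_te hTE).2 hw
      obtain ⟨hf₀, hall⟩ := sf_app_inv hsfv
      have hsfb : SF b := hall b (List.mem_append.2 (Or.inr (List.mem_cons_self)))
      rcases (ih b hsfb).2 (te_refl b) with hgt | hte
      · refine Or.inl (gt_te_right ?_ _ hTE)
        obtain ⟨g₀, rfl⟩ := hf₀
        have hmul : GT lt (Term.app (Sum.inl g₀) (pre ++ a :: post))
            (Term.app (Sum.inl (sym (Sum.inl g₀))) (pre ++ b :: post)) := by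
          refine GT.mul (Sum.inl g₀) _ (pre ++ b :: post)
            ((pre.map fun x => (x, [x])) ++ (a, [b]) :: (post.map fun x => (x, [x])))
            (a, [b]) ?_ ?_ ?_
            (List.mem_append.2 (Or.inr (List.mem_cons_self)))
            (by intro t ht; rcases List.mem_singleton.1 ht with rfl; exact hgt)
          · rw [List.map_append, List.map_cons]
            simp only [map_fst_singletons]
            exact List.Perm.refl _
          · rw [List.map_append, List.map_cons]
            rw [List.flatten_append, List.flatten_cons]
            rw [flatten_singletons, flatten_singletons]
            exact List.Perm.refl _
          · intro q hq t ht hne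
            rcases List.mem_append.1 hq with hq | hq
            · obtain ⟨x, hx, rfl⟩ := List.mem_map.1 hq
              rcases List.mem_singleton.1 ht with rfl
              exact absurd ⟨rfl, te_refl _⟩ hne
            · rcases List.mem_cons.1 hq with rfl | hq
              · rcases List.mem_singleton.1 ht with rfl
                exact hgt
              · obtain ⟨x, hx, rfl⟩ := List.mem_map.1 hq
                rcases List.mem_singleton.1 ht with rfl
                exact absurd ⟨rfl, te_refl _⟩ hne
        simpa using hmul
      · exact Or.inr (te_trans (te_congr f₀ pre post hte) hTE)

/-! ### Well-foundedness on star-free trees -/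

theorem acc_irrefl {α : Sort*} {r : α → α → Prop} {a : α} (h : Acc r a) : ¬ r a a := by
  induction h with
  | intro x hx ih => exact fun hxx => ih x hxx hxx

theorem acc_sub {α : Sort*} {r q : α → α → Prop} (hsub : ∀ x y, q x y → r x y) {a : α}
    (h : Acc r a) : Acc q a := by
  induction h with
  | intro x hx ih => exact Acc.intro x fun y hy => ih y (hsub y x hy)

theorem acc_no_chain {α : Sort*} {r : α → α → Prop} {a : α} (h : Acc r a) :
    ∀ g : ℕ → α, g 0 = a → (∀ n, r (g (n + 1)) (g n)) → False := by
  induction h with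
  | intro x hx ih =>
    intro g hg0 hstep
    exact ih (g 1) (hg0 ▸ hstep 0) (fun n => g (n + 1)) rfl fun n => hstep (n + 1)

variable (lt) in
def relT : Tree (β ⊕ β) X → Tree (β ⊕ β) X → Prop := fun A B =>
  ∃ a b, A = Tree.mk a ∧ B = Tree.mk b ∧ SF a ∧ SF b ∧ GT lt b a

variable (lt) in
def relT' : Tree (β ⊕ β) X → Tree (β ⊕ β) X → Prop := fun A B =>
  relT lt A B ∧ Acc (relT lt) B

def mkM (L : List T) : Multiset (Tree (β ⊕ β) X) := (L.map Tree.mk : List (Tree (β ⊕ β) X))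

theorem te_of_mk_eq {a b : T} (h : Tree.mk a = Tree.mk b) : TermEquiv a b := Quotient.exact h

theorem mk_eq_of_te {a b : T} (h : TermEquiv a b) :
    (Tree.mk a : Tree (β ⊕ β) X) = Tree.mk b := Quotient.sound h

open Relation in
theorem rtg_add_left {c a b : Multiset (Tree (β ⊕ β) X)}
    (h : ReflTransGen (CutExpand (relT' lt)) a b) :
    ReflTransGen (CutExpand (relT' lt)) (c + a) (c + b) := by
  induction h with
  | refl => exact ReflTransGen.refl
  | tail h hstep ih => exact ih.tail ((Relation.cutExpand_add_left c).mpr hstep)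

open Relation in
theorem tg_add_left {c a b : Multiset (Tree (β ⊕ β) X)}
    (h : TransGen (CutExpand (relT' lt)) a b) :
    TransGen (CutExpand (relT' lt)) (c + a) (c + b) := by
  induction h with
  | single hstep => exact TransGen.single ((Relation.cutExpand_add_left c).mpr hstep)
  | tail h hstep ih => exact ih.tail ((Relation.cutExpand_add_left c).mpr hstep)

open Relation in
theorem cutexpand_head {u : T} {ts : List T} {M : Multiset (Tree (β ⊕ β) X)}
    (hrel : ∀ t ∈ ts, relT' lt (Tree.mk t) (Tree.mk u)) :
    CutExpand (relT' lt) (mkM ts + M) (Tree.mk u ::ₘ M) := by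
  refine ⟨mkM ts, Tree.mk u, ?_, ?_⟩
  · intro a ha
    obtain ⟨t, ht, rfl⟩ := List.mem_map.1 (Multiset.mem_coe.1 ha)
    exact hrel t ht
  · show mkM ts + M + {Tree.mk u} = Tree.mk u ::ₘ M + mkM ts
    have : Tree.mk u ::ₘ M = {Tree.mk u} + M := rfl
    rw [this]
    abel

open Relation in
theorem mul_to_cutexpand :
    ∀ l : List (T × List T),
      (∀ p ∈ l, SF p.1 ∧ Acc (relT lt) (Tree.mk p.1)) →
      (∀ p ∈ l, ∀ t ∈ p.2, SF t) →
      (∀ p ∈ l, (∀ t ∈ p.2, GT lt p.1 t) ∨ (∃ t, p.2 = [t] ∧ TermEquiv p.1 t)) →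
      ReflTransGen (CutExpand (relT' lt)) (mkM ((l.map Prod.snd).flatten)) (mkM (l.map Prod.fst))
      ∧ ∀ p₀ ∈ l, (∀ t ∈ p₀.2, GT lt p₀.1 t) →
          TransGen (CutExpand (relT' lt)) (mkM ((l.map Prod.snd).flatten))
            (mkM (l.map Prod.fst)) := by
  intro l
  induction l with
  | nil =>
    intro _ _ _
    exact ⟨ReflTransGen.refl, fun p hp => absurd hp List.not_mem_nil⟩
  | cons p l ih =>
    intro hfst hsnd hdich
    obtain ⟨ihr, ihs⟩ := ih (fun q hq => hfst q (List.mem_cons_of_mem _ hq))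
      (fun q hq => hsnd q (List.mem_cons_of_mem _ hq))
      (fun q hq => hdich q (List.mem_cons_of_mem _ hq))
    have hpm : p ∈ p :: l := List.mem_cons_self
    have e1 : mkM (((p :: l).map Prod.snd).flatten)
        = mkM p.2 + mkM ((l.map Prod.snd).flatten) := by
      simp only [List.map_cons, List.flatten_cons, mkM, List.map_append]
      rfl
    have e2 : mkM ((p :: l).map Prod.fst) = Tree.mk p.1 ::ₘ mkM (l.map Prod.fst) := rfl
    by_cases hall : ∀ t ∈ p.2, GT lt p.1 t
    · have hstep : CutExpand (relT' lt) (mkM p.2 + mkM (l.map Prod.fst))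
          (Tree.mk p.1 ::ₘ mkM (l.map Prod.fst)) := by
        refine cutexpand_head fun t ht => ?_
        exact ⟨⟨t, p.1, rfl, rfl, hsnd p hpm t ht, (hfst p hpm).1, hall t ht⟩, (hfst p hpm).2⟩
      have hlift := rtg_add_left (lt := lt) (c := mkM p.2) ihr
      have htg : TransGen (CutExpand (relT' lt)) (mkM (((p :: l).map Prod.snd).flatten))
          (mkM ((p :: l).map Prod.fst)) := by
        rw [e1, e2]
        exact TransGen.tail' hlift hstep
      exact ⟨htg.to_reflTransGen, fun _ _ _ => htg⟩
    · obtain ⟨t, hpt, hTE⟩ := (hdich p hpm).resolve_left hall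
      have e3 : mkM p.2 = {Tree.mk p.1} := by
        rw [hpt]
        show {Tree.mk t} = {Tree.mk p.1}
        rw [mk_eq_of_te (te_symm hTE)]
      have e4 : ∀ M : Multiset (Tree (β ⊕ β) X), mkM p.2 + M = Tree.mk p.1 ::ₘ M := by
        intro M; rw [e3]; rfl
      constructor
      · rw [e1, e2, ← e4]
        exact rtg_add_left ihr
      · intro p₀ hp₀ hstrict
        rcases List.mem_cons.1 hp₀ with rfl | hp₀
        · exact absurd hstrict hall
        · rw [e1, e2, ← e4]
          exact tg_add_left (ihs p₀ hp₀ hstrict)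

theorem acc_var (x : X) : Acc (relT lt) (Tree.mk (Term.var x : T)) := by
  constructor
  intro B hB
  obtain ⟨a, b, rfl, heq, sfa, sfb, hgt⟩ := hB
  have hb : b = Term.var x := te_var (te_of_mk_eq heq)
  subst hb
  cases hgt

open Relation in
/-- main accessibility lemma, for a fixed head symbol `f` with precedence IH -/
theorem acc_app_of (htr : Transitive lt) {f : β}
    (IHf : ∀ g, lt g f → ∀ ts : List T,
      (∀ t ∈ ts, SF t ∧ Acc (relT lt) (Tree.mk t)) →
      Acc (relT lt) (Tree.mk (Term.app (Sum.inl g) ts))) :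
    ∀ m : Multiset (Tree (β ⊕ β) X), Acc (TransGen (CutExpand (relT' lt))) m →
      ∀ us : List T, (∀ u ∈ us, SF u ∧ Acc (relT lt) (Tree.mk u)) → mkM us = m →
        Acc (relT lt) (Tree.mk (Term.app (Sum.inl f) us)) := by
  intro m hacc
  induction hacc with
  | intro m hm ihm =>
    intro us hus hmus
    subst hmus
    -- key: every star-free term strictly below `f(us)` is accessible
    have key : ∀ (n : ℕ) (t : T), sizeOf t ≤ n → SF t →
        GT lt (Term.app (Sum.inl f) us) t → Acc (relT lt) (Tree.mk t) := by
      intro n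
      induction n with
      | zero => intro t hle; cases t <;> simp at hle
      | succ n ihn =>
        intro t hle hsf hgt
        cases hgt with
        | sub _ _ u _ hu hh =>
          by_cases hc : TermEquiv u t
          · rw [← mk_eq_of_te hc]
            exact (hus u hu).2
          · exact Acc.inv (hus u hu).2 ⟨t, u, rfl, rfl, hsf, (hus u hu).1, hh hc⟩
        | prec _ _ g ts hg hh =>
          obtain ⟨-, hall⟩ := sf_app_inv hsf
          refine IHf g (by simpa using hg) ts fun t' ht' => ⟨hall t' ht', ?_⟩
          refine ihn t' ?_ (hall t' ht') (hh t' ht')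
          have := List.sizeOf_lt_of_mem ht'
          simp only [Term.app.sizeOf_spec] at hle
          omega
        | mul _ _ ts l p₀ hus' hts hl hp₀ hstrict =>
          obtain ⟨-, hall⟩ := sf_app_inv hsf
          have hfst : ∀ p ∈ l, SF p.1 ∧ Acc (relT lt) (Tree.mk p.1) := by
            intro p hp
            exact hus p.1 (hus'.mem_iff.2 (List.mem_map.2 ⟨p, hp, rfl⟩))
          have hsnd : ∀ p ∈ l, ∀ t' ∈ p.2, SF t' := by
            intro p hp t' ht'
            exact hall t' (hts.mem_iff.2
              (List.mem_flatten.2 ⟨p.2, List.mem_map.2 ⟨p, hp, rfl⟩, ht'⟩))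
          have hdich : ∀ p ∈ l, (∀ t' ∈ p.2, GT lt p.1 t') ∨
              (∃ t', p.2 = [t'] ∧ TermEquiv p.1 t') := by
            intro p hp
            by_cases hq : ∀ t' ∈ p.2, GT lt p.1 t'
            · exact Or.inl hq
            · push_neg at hq
              obtain ⟨t', ht', hnot⟩ := hq
              right
              by_contra hcon
              exact hnot (hl p hp t' ht' fun hcc => hcon ⟨t', hcc.1, hcc.2⟩)
          have htg := (mul_to_cutexpand l hfst hsnd hdich).2 p₀ hp₀ hstrict
          have hts_acc : ∀ t' ∈ ts, SF t' ∧ Acc (relT lt) (Tree.mk t') := by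
            intro t' ht'
            refine ⟨hall t' ht', ?_⟩
            obtain ⟨c, hc, htc⟩ := List.mem_flatten.1 (hts.mem_iff.1 ht')
            obtain ⟨p, hp, rfl⟩ := List.mem_map.1 hc
            rcases hdich p hp with hq | ⟨t'', ht'', hTE⟩
            · exact Acc.inv (hfst p hp).2
                ⟨t', p.1, rfl, rfl, hall t' ht', (hfst p hp).1, hq t' htc⟩
            · rw [ht''] at htc
              rcases List.mem_singleton.1 htc with rfl
              rw [← mk_eq_of_te hTE]
              exact (hfst p hp).2
          have hmeq : mkM (l.map Prod.fst) = mkM us :=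
            Multiset.coe_eq_coe.2 (hus'.map Tree.mk).symm
          have hmts : mkM ts = mkM ((l.map Prod.snd).flatten) :=
            Multiset.coe_eq_coe.2 (hts.map Tree.mk)
          have := ihm (mkM ts) (by rw [hmts, ← hmeq] at *; exact hmts ▸ htg) ts hts_acc rfl
          simpa using this
    constructor
    intro B hB
    obtain ⟨a, b, rfl, heq, sfa, sfb, hgt⟩ := hB
    have hgt' : GT lt (Term.app (Sum.inl f) us) a :=
      gt_te_left hgt _ (te_symm (te_of_mk_eq heq))
    exact key (sizeOf a) a le_rfl sfa hgt'

/-- every star-free term is accessible -/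
theorem acc_of_sf (htr : Transitive lt) (hwf : WellFounded lt) :
    ∀ t : T, SF t → Acc (relT lt) (Tree.mk t) := by
  have hirr' : IsIrrefl (Tree (β ⊕ β) X) (relT' lt) :=
    ⟨fun a ⟨h1, h2⟩ => acc_irrefl h2 h1⟩
  have hP : ∀ f : β, ∀ ts : List T,
      (∀ t ∈ ts, SF t ∧ Acc (relT lt) (Tree.mk t)) →
      Acc (relT lt) (Tree.mk (Term.app (Sum.inl f) ts)) := by
    intro f
    induction f using WellFounded.induction hwf with
    | _ f IHf =>
      intro ts hts
      refine acc_app_of htr (fun g hg => IHf g hg) (mkM ts) ?_ ts hts rfl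
      refine Acc.transGen ?_
      refine @Relation.acc_of_singleton _ _ hirr' _ ?_
      intro a ha
      obtain ⟨t, ht, rfl⟩ := List.mem_map.1 (Multiset.mem_coe.1 ha)
      exact @Acc.cutExpand _ _ hirr' _ (acc_sub (fun x y h => h.1) (hts t ht).2)
  intro t hsf
  induction hsf with
  | var x => exact acc_var x
  | app r ts hp hall ih =>
    obtain ⟨f, rfl⟩ := hp
    exact hP f ts fun t' ht' => ⟨hall t' ht', ih t' ht'⟩

/-! ### chaining along a reduction -/

open Relation in
theorem ge_chain (htr : Transitive lt) {B : Tree (β ⊕ β) X} {b : T}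
    (hB : B = Tree.mk b) (hb : SF b) :
    ∀ {A : Tree (β ⊕ β) X}, ReflTransGen (TreeRel (StarRoot lt)) A B →
      ∀ a : T, A = Tree.mk a → (GT lt a b ∨ TermEquiv a b) := by
  intro A h
  induction h using Relation.ReflTransGen.head_induction_on with
  | refl =>
    intro a hA
    exact Or.inr (te_of_mk_eq (hA.symm.trans hB))
  | head h' h ih =>
    intro a hA
    obtain ⟨s, t, hAs, hCt, hrw⟩ := h'
    have hTEsa : TermEquiv s a := te_of_mk_eq (hAs.symm.trans hA)
    have hsb : GT lt s b ∨ TermEquiv s b := by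
      rcases ih t hCt with hgt | hte
      · exact Or.inl ((preserve htr hrw b hb).1 hgt)
      · exact (preserve htr hrw b hb).2 hte
    rcases hsb with hgt | hte
    · exact Or.inl (gt_te_left hgt a hTEsa)
    · exact Or.inr (te_trans (te_symm hTEsa) hte)

open Relation in
theorem step_gt (htr : Transitive lt) {A B : Tree (β ⊕ β) X}
    (h : TransGen (TreeRel (StarRoot lt)) A B) {a b : T}
    (hA : A = Tree.mk a) (hB : B = Tree.mk b) (ha : SF a) (hb : SF b) : GT lt a b := by
  obtain ⟨C, hAC, hCB⟩ := TransGen.head'_iff.1 h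
  obtain ⟨s, t, hAs, hCt, hrw⟩ := hAC
  have hTEsa : TermEquiv s a := te_of_mk_eq (hAs.symm.trans hA)
  have hsf_s : SF s := sf_of_te (te_symm hTEsa) ha
  obtain ⟨hun, hnst⟩ := sf_step hrw hsf_s
  rcases ge_chain htr hB hb hCB t hCt with hgt | hte
  · have := gt_unmark hgt hb
    rw [hun] at this
    exact gt_te_left this a hTEsa
  · exact absurd (sf_of_te (te_symm hte) hb) hnst

end Aux

end StarGames

namespace StarGames

/-- **Termination by simulation.**
Let `(Σ, <)` be a well-founded partial order.  If `R` is a binary relation on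
star-free trees over `Σ` with `R ⊆ ▷⁺`, then `R` is strongly normalizing. -/
theorem termination_by_simulation
    {σ X : Type} [Countable X] [Infinite X]
    (lt : σ → σ → Prop) (hirr : Irreflexive lt) (htrans : Transitive lt)
    (hwf : WellFounded lt)
    (R : Tree (σ ⊕ σ) X → Tree (σ ⊕ σ) X → Prop)
    (hdom : ∀ a b : Tree (σ ⊕ σ) X, R a b → StarFreeTree a ∧ StarFreeTree b)
    (hsub : ∀ a b : Tree (σ ⊕ σ) X, R a b → Relation.TransGen (StarTree lt) a b) :
    ¬ ∃ f : ℕ → Tree (σ ⊕ σ) X, ∀ n : ℕ, R (f n) (f (n + 1)) := by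
  rintro ⟨seq, hseq⟩
  have hsf : ∀ n, ∃ t, seq n = Tree.mk t ∧ StarFreeTerm t := fun n => (hdom _ _ (hseq n)).1
  choose rep hrep hrepsf using hsf
  have hgt : ∀ n, Aux.GT lt (rep n) (rep (n + 1)) := fun n =>
    Aux.step_gt htrans (hsub _ _ (hseq n)) (hrep n) (hrep (n + 1)) (hrepsf n) (hrepsf (n + 1))
  have hacc := Aux.acc_of_sf htrans hwf (rep 0) (hrepsf 0)
  exact Aux.acc_no_chain hacc (fun n => Tree.mk (rep n)) rfl fun n =>
    ⟨rep (n + 1), rep n, rfl, rfl, hrepsf (n + 1), hrepsf n, hgt n⟩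


end StarGames
end

section
/- On terms over Σ ∪ Σ⋆, swap steps can be postponed past Star steps: →_≃ · ▷ ⊆ ▷ · →_≃*, i.e., whenever s →_≃ u and u ▷ t, there exists a term v with s ▷ v and v →_≃* t. -/
namespace StarGames

section Aux

variable {σ X : Type}

/-- List-level description of one swap step at the top of an `app`. -/
inductive ListMove : List (Term σ X) → List (Term σ X) → Prop
  | trans (us : List (Term σ X)) (x y : Term σ X) (ws : List (Term σ X)) :
      ListMove (us ++ x :: y :: ws) (us ++ y :: x :: ws)
  | point (pre : List (Term σ X)) (a b : Term σ X) (post : List (Term σ X)) :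
      SwapStep a b → ListMove (pre ++ a :: post) (pre ++ b :: post)

lemma ListMove.toSwapStep {l m : List (Term σ X)} (h : ListMove l m) (f : σ) :
    SwapStep (Term.app f l) (Term.app f m) := by
  cases h with
  | trans us x y ws => exact Rewrite.root (SwapRoot.swap f us x y ws)
  | point pre a b post hab => exact Rewrite.congr f pre post hab

lemma swapStep_inv {s : Term σ X} {f : σ} {m : List (Term σ X)}
    (h : SwapStep s (Term.app f m)) :
    ∃ l, s = Term.app f l ∧ ListMove l m := by
  cases h with
  | root hr =>
    cases hr with
    | swap g us x y ws =>
      exact ⟨us ++ x :: y :: ws, rfl, ListMove.trans us x y ws⟩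
  | congr g pre post hst =>
    exact ⟨_, rfl, ListMove.point pre _ _ post hst⟩

lemma swapStep_symm {s t : Term σ X} (h : SwapStep s t) : SwapStep t s := by
  induction h with
  | root hr =>
    cases hr with
    | swap f us x y ws => exact Rewrite.root (SwapRoot.swap f us y x ws)
  | congr f pre post _ ih => exact Rewrite.congr f pre post ih

lemma rtgSwap_symm {a b : Term σ X} (h : Relation.ReflTransGen SwapStep a b) :
    Relation.ReflTransGen SwapStep b a := by
  induction h with
  | refl => exact .refl
  | tail _ h2 ih => exact Relation.ReflTransGen.head (swapStep_symm h2) ih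

lemma congrStar (f : σ) (pre post : List (Term σ X)) {a b : Term σ X}
    (h : Relation.ReflTransGen SwapStep a b) :
    Relation.ReflTransGen SwapStep
      (Term.app f (pre ++ a :: post)) (Term.app f (pre ++ b :: post)) :=
  Relation.ReflTransGen.lift (fun x => Term.app f (pre ++ x :: post))
    (fun _ _ hx => Rewrite.congr f pre post hx) _ _ h

/-- Move an element past a block by adjacent swaps. -/
lemma moveStar (f : σ) (a : Term σ X) (post : List (Term σ X)) :
    ∀ (l pre : List (Term σ X)),
      Relation.ReflTransGen SwapStep
        (Term.app f (pre ++ a :: (l ++ post)))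
        (Term.app f (pre ++ (l ++ a :: post))) := by
  intro l
  induction l with
  | nil => intro pre; exact .refl
  | cons c l ih =>
    intro pre
    have step : SwapStep (Term.app f (pre ++ a :: ((c :: l) ++ post)))
        (Term.app f ((pre ++ [c]) ++ a :: (l ++ post))) := by
      have := Rewrite.root (R := SwapRoot (σ := σ) (X := X))
        (SwapRoot.swap f pre a c (l ++ post))
      simpa [SwapStep] using this
    refine Relation.ReflTransGen.head step ?_
    have := ih (pre ++ [c])
    simpa using this

/-- Rewrite all replicated copies one by one. -/
lemma repStar (f : σ) {a b : Term σ X} (h : SwapStep a b) (post : List (Term σ X)) :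
    ∀ (k : ℕ) (pre : List (Term σ X)),
      Relation.ReflTransGen SwapStep
        (Term.app f (pre ++ (List.replicate k a ++ post)))
        (Term.app f (pre ++ (List.replicate k b ++ post))) := by
  intro k
  induction k with
  | zero => intro pre; exact .refl
  | succ k ih =>
    intro pre
    have step : SwapStep (Term.app f (pre ++ (List.replicate (k+1) a ++ post)))
        (Term.app f ((pre ++ [b]) ++ (List.replicate k a ++ post))) := by
      have := Rewrite.congr f pre (List.replicate k a ++ post) h
      simpa [SwapStep, List.replicate_succ] using this
    refine Relation.ReflTransGen.head step ?_
    have := ih (pre ++ [b])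
    simpa [List.replicate_succ] using this

/-- The key splitting lemma: how a swap move on a list interacts with a
distinguished position of the target list. -/
lemma listMove_split {ls m : List (Term σ X)} (h : ListMove ls m)
    (xs : List (Term σ X)) (c : Term σ X) (zs : List (Term σ X))
    (hm : m = xs ++ c :: zs) :
    (∃ xs' zs', ls = xs' ++ c :: zs' ∧ ∀ (f : σ) (mm : List (Term σ X)),
        Relation.ReflTransGen SwapStep
          (Term.app f (xs' ++ (mm ++ zs'))) (Term.app f (xs ++ (mm ++ zs)))) ∨
    (∃ c', SwapStep c' c ∧ ls = xs ++ c' :: zs) := by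
  cases h with
  | trans us x y ws =>
    rcases List.append_eq_append_iff.mp hm with ⟨a, ha1, ha2⟩ | ⟨b, hb1, hb2⟩
    · -- xs = us ++ a, y :: x :: ws = a ++ c :: zs
      rcases a with _ | ⟨a0, a⟩
      · -- a = [] : c = y, zs = x :: ws
        simp only [List.nil_append] at ha2
        injection ha2 with h1 h2
        subst h1; subst h2; subst ha1
        left
        refine ⟨us ++ [x], ws, by simp, ?_⟩
        intro f mm
        have := moveStar f x ws mm us
        simpa using this
      · rcases a with _ | ⟨a1, a⟩
        · -- a = [a0] : a0 = y, c = x, zs = ws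
          simp only [List.cons_append, List.nil_append] at ha2
          injection ha2 with h1 h2; injection h2 with h2 h3
          subst h1; subst h2; subst h3; subst ha1
          left
          refine ⟨us, y :: ws, rfl, ?_⟩
          intro f mm
          have := rtgSwap_symm (moveStar f y ws mm us)
          simpa using this
        · -- a = a0 :: a1 :: a : a0 = y, a1 = x, ws = a ++ c :: zs
          simp only [List.cons_append] at ha2
          injection ha2 with h1 h2; injection h2 with h2 h3
          subst h1; subst h2; subst h3; subst ha1
          left
          refine ⟨us ++ x :: y :: a, zs, by simp, ?_⟩
          intro f mm
          refine Relation.ReflTransGen.single ?_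
          have := Rewrite.root (R := SwapRoot (σ := σ) (X := X))
            (SwapRoot.swap f us x y (a ++ (mm ++ zs)))
          simpa [SwapStep] using this
    · -- us = xs ++ b, c :: zs = b ++ y :: x :: ws
      rcases b with _ | ⟨b0, b⟩
      · -- b = [] : c = y, zs = x :: ws, us = xs
        simp only [List.nil_append] at hb2
        injection hb2 with h1 h2
        subst h1; subst h2; subst hb1
        left
        refine ⟨xs ++ [x], ws, by simp, ?_⟩
        intro f mm
        have := moveStar f x ws mm xs
        simpa using this
      · -- b = b0 :: b : c = b0, zs = b ++ y :: x :: ws, us = xs ++ c :: b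
        simp only [List.cons_append] at hb2
        injection hb2 with h1 h2
        subst h1; subst h2; subst hb1
        left
        refine ⟨xs, b ++ x :: y :: ws, by simp, ?_⟩
        intro f mm
        refine Relation.ReflTransGen.single ?_
        have := Rewrite.root (R := SwapRoot (σ := σ) (X := X))
          (SwapRoot.swap f (xs ++ mm ++ b) x y ws)
        simpa [SwapStep] using this
  | point pre a b post hab =>
    rcases List.append_eq_append_iff.mp hm with ⟨d, hd1, hd2⟩ | ⟨e, he1, he2⟩
    · -- xs = pre ++ d, b :: post = d ++ c :: zs
      rcases d with _ | ⟨d0, d⟩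
      · -- d = [] : c = b, zs = post
        simp only [List.nil_append] at hd2
        injection hd2 with h1 h2
        subst h1; subst h2; subst hd1
        right
        exact ⟨a, hab, by simp⟩
      · -- d = d0 :: d : b = d0, post = d ++ c :: zs
        simp only [List.cons_append] at hd2
        injection hd2 with h1 h2
        subst h1; subst h2; subst hd1
        left
        refine ⟨pre ++ a :: d, zs, by simp, ?_⟩
        intro f mm
        refine Relation.ReflTransGen.single ?_
        have := Rewrite.congr f pre (d ++ (mm ++ zs)) hab
        simpa [SwapStep] using this
    · -- pre = xs ++ e, c :: zs = e ++ b :: post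
      rcases e with _ | ⟨e0, e⟩
      · -- e = [] : c = b, zs = post, pre = xs
        simp only [List.nil_append] at he2
        injection he2 with h1 h2
        subst h1; subst h2; subst he1
        right
        exact ⟨a, hab, by simp⟩
      · -- e = e0 :: e : c = e0, zs = e ++ b :: post, pre = xs ++ c :: e
        simp only [List.cons_append] at he2
        injection he2 with h1 h2
        subst h1; subst h2; subst he1
        left
        refine ⟨xs, e ++ a :: post, by simp, ?_⟩
        intro f mm
        refine Relation.ReflTransGen.single ?_
        have := Rewrite.congr f (xs ++ mm ++ e) post hab
        simpa [SwapStep] using this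

end Aux

private lemma swap_postponement_aux {σ X : Type} (lt : σ → σ → Prop)
    {u t : Term (σ ⊕ σ) X} (h2 : Rewrite (StarRoot lt) u t) :
    ∀ s : Term (σ ⊕ σ) X, SwapStep s u →
      ∃ v : Term (σ ⊕ σ) X, StarStep lt s v ∧ Relation.ReflTransGen SwapStep v t := by
  induction h2 with
  | @root u t hr =>
    intro s h1
    cases hr with
    | put f ts =>
      obtain ⟨ls, rfl, hmv⟩ := swapStep_inv h1
      exact ⟨Term.app (Sum.inr f) ls, Rewrite.root (StarRoot.put f ls),
        Relation.ReflTransGen.single (hmv.toSwapStep _)⟩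
    | select f xs y zs =>
      obtain ⟨ls, rfl, hmv⟩ := swapStep_inv h1
      rcases listMove_split hmv xs t zs rfl with ⟨xs', zs', rfl, _⟩ | ⟨y', hy, rfl⟩
      · exact ⟨t, Rewrite.root (StarRoot.select f xs' t zs'), .refl⟩
      · exact ⟨y', Rewrite.root (StarRoot.select f xs y' zs),
          Relation.ReflTransGen.single hy⟩
    | copy f g k ts hgf =>
      obtain ⟨ls, rfl, hmv⟩ := swapStep_inv h1
      refine ⟨Term.app (Sum.inl g) (List.replicate k (Term.app (Sum.inr f) ls)),
        Rewrite.root (StarRoot.copy f g k ls hgf), ?_⟩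
      have := repStar (Sum.inl g) (hmv.toSwapStep (Sum.inr f)) [] k []
      simpa using this
    | down f g k xs ys zs =>
      obtain ⟨ls, rfl, hmv⟩ := swapStep_inv h1
      rcases listMove_split hmv xs _ zs rfl with ⟨xs', zs', rfl, hstar⟩ | ⟨c', hc, rfl⟩
      · refine ⟨Term.app (Sum.inl f)
            (xs' ++ List.replicate k (Term.app (Sum.inr g) ys) ++ zs'),
          Rewrite.root (StarRoot.down f g k xs' ys zs'), ?_⟩
        have := hstar (Sum.inl f) (List.replicate k (Term.app (Sum.inr g) ys))
        simpa [List.append_assoc] using this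
      · obtain ⟨ys', rfl, hmv'⟩ := swapStep_inv hc
        refine ⟨Term.app (Sum.inl f)
            (xs ++ List.replicate k (Term.app (Sum.inr g) ys') ++ zs),
          Rewrite.root (StarRoot.down f g k xs ys' zs), ?_⟩
        have := repStar (Sum.inl f) (hmv'.toSwapStep (Sum.inr g)) zs k xs
        simpa [List.append_assoc] using this
  | @congr a b f pre post hstep ih =>
    intro s h1
    obtain ⟨ls, rfl, hmv⟩ := swapStep_inv h1
    rcases listMove_split hmv pre a post rfl with ⟨xs', zs', rfl, hstar⟩ | ⟨c', hc, rfl⟩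
    · refine ⟨Term.app f (xs' ++ b :: zs'), Rewrite.congr f xs' zs' hstep, ?_⟩
      have := hstar f [b]
      simpa using this
    · obtain ⟨v', hv1, hv2⟩ := ih c' hc
      exact ⟨Term.app f (pre ++ v' :: post), Rewrite.congr f pre post hv1,
        congrStar f pre post hv2⟩

/-- On terms over `Σ ∪ Σ⋆`, swap steps can be postponed past `Star` steps:
whenever `s →_≃ u` and `u ▷ t`, there exists a term `v` with `s ▷ v` and `v →_≃* t`. -/
theorem swap_postponement
    {σ X : Type} [Countable X] [Infinite X]
    (lt : σ → σ → Prop) (hirr : Irreflexive lt) (htrans : Transitive lt)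
    (hwf : WellFounded lt)
    (s u t : Term (σ ⊕ σ) X)
    (h1 : SwapStep s u) (h2 : StarStep lt u t) :
    ∃ v : Term (σ ⊕ σ) X, StarStep lt s v ∧ Relation.ReflTransGen SwapStep v t := by
  exact swap_postponement_aux lt h2 s h1

end StarGames
end
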